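/- arXiv:2002.09980 — 7 statements merged into one kernel-verified Lean document; each statement's English description precedes it below -/
import Mathlib

section
/- Let n ≥ 1 be an integer and let ψ : ℝ → ℝ be (n−1)-times continuously differentiable with |ψ^{(n−1)}(x)| ≤ C e^{−γ|x|} for all x ∈ ℝ, where C > 0 and γ > 0 are constants. Let θ ∈ ℤ and suppose there are real numbers a_0,…,a_n and b_0,…,b_n such that ψ(x) = Σ_{j=0}^{n} a_j (x − θ/2)^j for all x ∈ [(θ−1)/2, θ/2] and ψ(x) = Σ_{j=0}^{n} b_j (x − θ/2)^j for all x ∈ [θ/2, (θ+1)/2]. Then |b_n| ≤ 4 C e^{γ/2} e^{−γ|θ|/2}. -/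
open MeasureTheory Set Finset Real

set_option maxHeartbeats 800000

lemma iteratedDeriv_polynomial (k : ℕ) (p : Polynomial ℝ) :
    iteratedDeriv k (fun x => p.eval x) = fun x => (Polynomial.derivative^[k] p).eval x := by
  induction k generalizing p with
  | zero => simp
  | succ k ih =>
    have hd : (deriv fun x => p.eval x) = fun x => (Polynomial.derivative p).eval x :=
      funext fun x => Polynomial.deriv p
    rw [iteratedDeriv_succ', hd, ih, Function.iterate_succ_apply]

theorem stmt_1
    (n : ℕ) (hn : 1 ≤ n) (ψ : ℝ → ℝ)
    (hsmooth : ContDiff ℝ (n - 1 : ℕ) ψ)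
    (C γ : ℝ) (hC : 0 < C) (hγ : 0 < γ)
    (hdecay : ∀ x : ℝ, |iteratedDeriv (n - 1) ψ x| ≤ C * Real.exp (-γ * |x|))
    (θ : ℤ) (a b : ℕ → ℝ)
    (hleft : ∀ x ∈ Set.Icc (((θ : ℝ) - 1) / 2) ((θ : ℝ) / 2),
      ψ x = ∑ j ∈ Finset.range (n + 1), a j * (x - (θ : ℝ) / 2) ^ j)
    (hright : ∀ x ∈ Set.Icc ((θ : ℝ) / 2) (((θ : ℝ) + 1) / 2),
      ψ x = ∑ j ∈ Finset.range (n + 1), b j * (x - (θ : ℝ) / 2) ^ j) :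
    |b n| ≤ 4 * C * Real.exp (γ / 2) * Real.exp (-γ * |(θ : ℝ)| / 2) := by
  obtain ⟨c, hcdef⟩ : ∃ c : ℝ, c = (θ : ℝ) / 2 := ⟨_, rfl⟩
  have hright' : ∀ x ∈ Set.Icc c (c + 1 / 2),
      ψ x = ∑ j ∈ Finset.range (n + 1), b j * (x - c) ^ j := by
    intro x hx
    rw [hcdef]
    rw [hcdef] at hx
    exact hright x ⟨hx.1, by linarith [hx.2]⟩
  set q : Polynomial ℝ :=
    ∑ j ∈ Finset.range (n + 1), Polynomial.C (b j) * (Polynomial.X - Polynomial.C c) ^ j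
    with hqdef
  have hqeval : ∀ x : ℝ, q.eval x = ∑ j ∈ Finset.range (n + 1), b j * (x - c) ^ j := by
    intro x
    simp [hqdef, Polynomial.eval_finset_sum]
  have hψq : ∀ x ∈ Set.Icc c (c + 1 / 2), ψ x = q.eval x := by
    intro x hx
    rw [hqeval]
    exact hright' x hx
  set f := iteratedDeriv (n - 1) ψ with hfdef
  set g : ℝ → ℝ := fun x => (Polynomial.derivative^[n - 1] q).eval x with hgdef
  have hlt : c < c + 1 / 2 := by linarith
  have heq : Set.EqOn f g (Set.Ioo c (c + 1 / 2)) := by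
    intro x hx
    have hev : ψ =ᶠ[nhds x] fun y => q.eval y := by
      filter_upwards [Ioo_mem_nhds hx.1 hx.2] with y hy
      exact hψq y (Set.Ioo_subset_Icc_self hy)
    rw [hfdef, hev.iteratedDeriv_eq (n - 1), iteratedDeriv_polynomial]
  have heq' : Set.EqOn f g (Set.Icc c (c + 1 / 2)) := by
    have h := heq.closure (hsmooth.continuous_iteratedDeriv (n - 1) le_rfl)
      ((Polynomial.derivative^[n - 1] q).continuous_aeval)
    rwa [closure_Ioo hlt.ne] at h
  -- degree facts
  have hqdeg : q.natDegree ≤ n := by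
    apply Polynomial.natDegree_sum_le_of_forall_le
    intro j hj
    refine (Polynomial.natDegree_C_mul_le _ _).trans ?_
    rw [Polynomial.natDegree_pow, Polynomial.natDegree_X_sub_C, mul_one]
    exact Nat.lt_succ_iff.mp (Finset.mem_range.mp hj)
  have hrdeg : (Polynomial.derivative^[n - 1] q).natDegree < 2 := by
    have h1 := Polynomial.natDegree_iterate_derivative q (n - 1)
    omega
  have hqcoeff : q.coeff n = b n := by
    rw [hqdef, Polynomial.finset_sum_coeff, Finset.sum_eq_single n]
    · rw [Polynomial.coeff_C_mul]
      have hm : ((Polynomial.X - Polynomial.C c) ^ n).coeff n = 1 := by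
        have h := ((Polynomial.monic_X_sub_C c).pow n).coeff_natDegree
        rwa [Polynomial.natDegree_pow, Polynomial.natDegree_X_sub_C, mul_one] at h
      rw [hm, mul_one]
    · intro j hj hjn
      rw [Polynomial.coeff_C_mul, Polynomial.coeff_eq_zero_of_natDegree_lt, mul_zero]
      rw [Polynomial.natDegree_pow, Polynomial.natDegree_X_sub_C, mul_one]
      have := Finset.mem_range.mp hj
      omega
    · intro h
      exact absurd (Finset.self_mem_range_succ n) h
  set D : ℝ := (n.descFactorial (n - 1) : ℝ) with hDdef
  have hr1 : (Polynomial.derivative^[n - 1] q).coeff 1 = D * b n := by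
    rw [Polynomial.coeff_iterate_derivative]
    have h1 : 1 + (n - 1) = n := by omega
    rw [h1, hqcoeff, nsmul_eq_mul, hDdef]
  have hevalr : ∀ x : ℝ, (Polynomial.derivative^[n - 1] q).eval x =
      (Polynomial.derivative^[n - 1] q).coeff 0 + (Polynomial.derivative^[n - 1] q).coeff 1 * x := by
    intro x
    rw [Polynomial.eval_eq_sum_range' hrdeg]
    simp [Finset.sum_range_succ]
  have hdiff : f (c + 1 / 2) - f c = D * b n * (1 / 2) := by
    rw [heq' (Set.right_mem_Icc.mpr hlt.le), heq' (Set.left_mem_Icc.mpr hlt.le), hgdef]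
    simp only [hevalr, hr1]
    ring
  have hD1 : (1 : ℝ) ≤ D := by
    rw [hDdef]
    have hne : n.descFactorial (n - 1) ≠ 0 := by
      intro h
      have := Nat.descFactorial_eq_zero_iff_lt.mp h
      omega
    exact_mod_cast Nat.one_le_iff_ne_zero.mpr hne
  -- bounds
  have habsθ : |c| = |(θ : ℝ)| / 2 := by rw [hcdef, abs_div]; norm_num
  have h1 : |f c| ≤ C * (Real.exp (γ / 2) * Real.exp (-γ * |(θ : ℝ)| / 2)) := by
    refine (hdecay c).trans ?_
    rw [← Real.exp_add]
    apply mul_le_mul_of_nonneg_left _ hC.le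
    apply Real.exp_le_exp.mpr
    rw [habsθ]
    linarith
  have h2 : |f (c + 1 / 2)| ≤ C * (Real.exp (γ / 2) * Real.exp (-γ * |(θ : ℝ)| / 2)) := by
    refine (hdecay (c + 1 / 2)).trans ?_
    rw [← Real.exp_add]
    apply mul_le_mul_of_nonneg_left _ hC.le
    apply Real.exp_le_exp.mpr
    have habs : |c + 1 / 2| = |(θ : ℝ) + 1| / 2 := by
      rw [hcdef, show (θ : ℝ) / 2 + 1 / 2 = ((θ : ℝ) + 1) / 2 by ring, abs_div]
      norm_num
    rw [habs]
    have htri : |(θ : ℝ)| - 1 ≤ |(θ : ℝ) + 1| := by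
      have h := abs_add_le ((θ : ℝ) + 1) (-1)
      have he : (θ : ℝ) + 1 + (-1) = (θ : ℝ) := by ring
      rw [he, abs_neg, abs_one] at h
      linarith
    nlinarith [mul_le_mul_of_nonneg_left htri hγ.le]
  have hbn : |b n| ≤ |D * b n| := by
    rw [abs_mul]
    have : |D| = D := abs_of_pos (lt_of_lt_of_le one_pos hD1)
    rw [this]
    exact le_mul_of_one_le_left (abs_nonneg _) hD1
  have hDb : |D * b n| ≤ 4 * C * (Real.exp (γ / 2) * Real.exp (-γ * |(θ : ℝ)| / 2)) := by
    have hDbn : D * b n = 2 * (f (c + 1 / 2) - f c) := by rw [hdiff]; ring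
    rw [hDbn, abs_mul, abs_two]
    have ht : |f (c + 1 / 2) - f c| ≤ |f (c + 1 / 2)| + |f c| := by
      calc |f (c + 1 / 2) - f c| = |f (c + 1 / 2) + -(f c)| := by rw [sub_eq_add_neg]
        _ ≤ |f (c + 1 / 2)| + |-(f c)| := abs_add_le _ _
        _ = |f (c + 1 / 2)| + |f c| := by rw [abs_neg]
    linarith
  calc |b n| ≤ |D * b n| := hbn
    _ ≤ 4 * C * (Real.exp (γ / 2) * Real.exp (-γ * |(θ : ℝ)| / 2)) := hDb
    _ = 4 * C * Real.exp (γ / 2) * Real.exp (-γ * |(θ : ℝ)| / 2) := by ring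
end

section
/- Let n ∈ ℕ. Let φ : ℝ → ℝ be continuous, vanishing outside (−2^{−4}, 2^{−4}), with ∫_ℝ x^m φ(x) dx = 0 for every integer 0 ≤ m ≤ n+1, and let Φ_{n+1} denote its (n+1)-fold iterated primitive. Let ψ : ℝ → ℝ be locally integrable and suppose there are real numbers A_0, A_1 and c_0,…,c_{n−1} such that ψ(x) = A_0 (x−1/2)^n + Σ_{j=0}^{n−1} c_j (x−1/2)^j for all x ∈ [0, 1/2] and ψ(x) = A_1 (x−1/2)^n + Σ_{j=0}^{n−1} c_j (x−1/2)^j for all x ∈ [1/2, 1] (the same lower-order coefficients on both halves). Then for every x ∈ [1/4, 3/4], |(φ*ψ)(x)| = n! · |A_1 − A_0| · |Φ_{n+1}(x − 1/2)|. -/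
open MeasureTheory Set Finset Real

/-- The `j`-fold iterated primitive of `φ`: `Φ_0 = φ` and
`Φ_j(x) = ∫_{-∞}^x Φ_{j-1}(t) dt`. -/
noncomputable def iterPrim (φ : ℝ → ℝ) : ℕ → ℝ → ℝ
  | 0 => φ
  | j + 1 => fun x => ∫ t in Set.Iic x, iterPrim φ j t

/-! On the support of `φ`, `y ↦ ψ (x - y)` is the left-hand polynomial in `u - y`, `u = x - 1/2`,
plus the jump `(A₁ - A₀) (u - y) ^ n` on `y ≤ u`; this works because both halves share the
lower-order coefficients. The vanishing moments of `φ` kill the polynomial part, and Cauchy's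
formula `Φ_{n+1}(u) = (1 / n!) ∫_{-∞}^u (u - s) ^ n φ s ds`, proved by induction on `n` with one
integration by parts per step, identifies what is left. -/

section Primitive

variable {f : ℝ → ℝ} {a : ℝ}

lemma integrableOn_Iic_of_eq_zero (hf : Continuous f) (hfa : ∀ x ≤ a, f x = 0) (b : ℝ) :
    IntegrableOn f (Iic b) := by
  have hzero : IntegrableOn f (Iic a) :=
    (integrableOn_congr_fun (fun x hx => hfa x hx) measurableSet_Iic).2 integrableOn_zero
  refine (hzero.union (hf.integrableOn_Icc (a := a) (b := b))).mono_set fun x hx => ?_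
  rcases le_total x a with h | h
  exacts [Or.inl h, Or.inr ⟨h, hx⟩]

lemma setIntegral_Iic_eq_intervalIntegral (hf : Continuous f) (hfa : ∀ x ≤ a, f x = 0)
    (b : ℝ) : ∫ x in Iic b, f x = ∫ x in a..b, f x := by
  rw [← intervalIntegral.integral_Iic_sub_Iic (integrableOn_Iic_of_eq_zero hf hfa a)
    (integrableOn_Iic_of_eq_zero hf hfa b), setIntegral_eq_zero_of_forall_eq_zero (t := Iic a) hfa,
    sub_zero]

lemma iterPrim_one_eq_zero (hfa : ∀ x ≤ a, f x = 0) {x : ℝ} (hx : x ≤ a) :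
    iterPrim f 1 x = 0 :=
  setIntegral_eq_zero_of_forall_eq_zero fun t ht => hfa t (le_trans ht hx)

lemma hasDerivAt_iterPrim_one (hf : Continuous f) (hfa : ∀ x ≤ a, f x = 0) (x : ℝ) :
    HasDerivAt (iterPrim f 1) (f x) x := by
  have : iterPrim f 1 = fun b => ∫ t in a..b, f t :=
    funext (setIntegral_Iic_eq_intervalIntegral hf hfa)
  rw [this]
  exact (hf.integral_hasStrictDerivAt a x).hasDerivAt

lemma iterPrim_succ' (f : ℝ → ℝ) : ∀ j, iterPrim f (j + 1) = iterPrim (iterPrim f 1) j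
  | 0 => rfl
  | j + 1 => by rw [iterPrim, iterPrim_succ' f j]; rfl

lemma intervalIntegral_sub_pow_succ_mul_eq {F : ℝ → ℝ} (hf : Continuous f)
    (hF : ∀ x, HasDerivAt F (f x) x) (hFa : F a = 0) (j : ℕ) (b : ℝ) :
    ∫ s in a..b, (b - s) ^ (j + 1) * f s = (j + 1) * ∫ s in a..b, (b - s) ^ j * F s := by
  have hu : ∀ s, HasDerivAt (fun s => (b - s) ^ (j + 1)) (-((j + 1) * (b - s) ^ j)) s := by
    intro s
    refine ((hasDerivAt_pow (j + 1) (b - s)).comp s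
      ((hasDerivAt_id s).const_sub b)).congr_deriv ?_
    push_cast
    ring
  rw [intervalIntegral.integral_mul_deriv_eq_deriv_mul (fun s _ => hu s) (fun s _ => hF s)
    ((by fun_prop : Continuous _).intervalIntegrable _ _) (hf.intervalIntegrable _ _)]
  simp [hFa, ← intervalIntegral.integral_const_mul, mul_assoc]

theorem iterPrim_succ_eq_intervalIntegral (hf : Continuous f) (hfa : ∀ x ≤ a, f x = 0)
    (j : ℕ) (b : ℝ) : iterPrim f (j + 1) b = (∫ s in a..b, (b - s) ^ j * f s) / j.factorial := by
  induction j generalizing f with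
  | zero => simp [iterPrim, setIntegral_Iic_eq_intervalIntegral hf hfa]
  | succ j ih =>
    have hF := hasDerivAt_iterPrim_one hf hfa
    rw [iterPrim_succ', ih (continuous_iff_continuousAt.2 fun x => (hF x).continuousAt)
      (fun x hx => iterPrim_one_eq_zero hfa hx), intervalIntegral_sub_pow_succ_mul_eq hf hF
      (iterPrim_one_eq_zero hfa le_rfl), Nat.factorial_succ]
    push_cast
    field_simp

theorem iterPrim_succ_eq_setIntegral (hf : Continuous f) (hfa : ∀ x ≤ a, f x = 0)
    (j : ℕ) (b : ℝ) : iterPrim f (j + 1) b = (∫ s in Iic b, (b - s) ^ j * f s) / j.factorial := by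
  rw [iterPrim_succ_eq_intervalIntegral hf hfa,
    setIntegral_Iic_eq_intervalIntegral (by fun_prop) fun x hx => by simp [hfa x hx]]

end Primitive

section Moments

variable {f : ℝ → ℝ}

lemma integral_mul_sub_pow_eq_zero {k : ℕ} (hint : ∀ m ≤ k, Integrable fun x => x ^ m * f x)
    (hmom : ∀ m ≤ k, ∫ x, x ^ m * f x = 0) (u : ℝ) : ∫ y, f y * (u - y) ^ k = 0 := by
  have hexpand : ∀ y, f y * (u - y) ^ k = ∑ i ∈ range (k + 1),
      (-1) ^ (i + k) * u ^ i * k.choose i * (y ^ (k - i) * f y) := fun y => by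
    rw [sub_pow, Finset.mul_sum]
    exact Finset.sum_congr rfl fun i _ => by ring
  simp_rw [hexpand]
  rw [integral_finsetSum _ fun i _ => (hint _ (k.sub_le i)).const_mul _]
  exact Finset.sum_eq_zero fun i _ => by rw [integral_const_mul, hmom _ (k.sub_le i), mul_zero]

lemma integral_mul_pow_add_sum_eq_zero (hf : Continuous f) (hfc : HasCompactSupport f) {n : ℕ}
    (hmom : ∀ m ≤ n, ∫ x, x ^ m * f x = 0) (A u : ℝ) (c : ℕ → ℝ) :
    ∫ y, f y * (A * (u - y) ^ n + ∑ j ∈ range n, c j * (u - y) ^ j) = 0 := by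
  have hint : ∀ k, Integrable fun y => f y * (u - y) ^ k := fun k =>
    (hf.mul (by fun_prop)).integrable_of_hasCompactSupport hfc.mul_right
  have hvanish : ∀ k ≤ n, ∫ y, f y * (u - y) ^ k = 0 := fun k hk =>
    integral_mul_sub_pow_eq_zero
      (fun m _ => ((continuous_pow m).mul hf).integrable_of_hasCompactSupport hfc.mul_left)
      (fun m hm => hmom m (hm.trans hk)) u
  simp_rw [mul_add, Finset.mul_sum, mul_left_comm (f _)]
  rw [integral_add ((hint n).const_mul _) (integrable_finsetSum _ fun j _ => (hint j).const_mul _),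
    integral_finsetSum _ fun j _ => (hint j).const_mul _, integral_const_mul, hvanish n le_rfl]
  simp only [integral_const_mul, mul_zero, zero_add]
  exact Finset.sum_eq_zero fun j hj => by
    rw [hvanish j (Finset.mem_range.1 hj).le, mul_zero]

end Moments

lemma mul_apply_sub_eq_of_piecewise {f ψ : ℝ → ℝ} {n : ℕ} {A₀ A₁ : ℝ} {c : ℕ → ℝ}
    (hsupp : Function.support f ⊆ Ioo (-(1 / 4)) (1 / 4))
    (hleft : ∀ x ∈ Icc (0 : ℝ) (1 / 2),
      ψ x = A₀ * (x - 1 / 2) ^ n + ∑ j ∈ range n, c j * (x - 1 / 2) ^ j)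
    (hright : ∀ x ∈ Icc (1 / 2 : ℝ) 1,
      ψ x = A₁ * (x - 1 / 2) ^ n + ∑ j ∈ range n, c j * (x - 1 / 2) ^ j)
    {x : ℝ} (hx : x ∈ Icc (1 / 4 : ℝ) (3 / 4)) (y : ℝ) :
    f y * ψ (x - y) =
      f y * (A₀ * (x - 1 / 2 - y) ^ n + ∑ j ∈ range n, c j * (x - 1 / 2 - y) ^ j) +
        (A₁ - A₀) * (Iic (x - 1 / 2)).indicator (fun y => (x - 1 / 2 - y) ^ n * f y) y := by
  by_cases hy : f y = 0
  · simp [hy, indicator_apply]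
  obtain ⟨hy₁, hy₂⟩ := hsupp hy
  have hsub : x - y - 1 / 2 = x - 1 / 2 - y := by ring
  by_cases hyu : y ≤ x - 1 / 2
  · rw [hright (x - y) ⟨by linarith, by linarith [hx.2]⟩, hsub,
      indicator_of_mem (Set.mem_Iic.2 hyu)]
    ring
  · rw [hleft (x - y) ⟨by linarith [hx.1], by linarith⟩, hsub,
      indicator_of_notMem (mt Set.mem_Iic.1 hyu)]
    ring

theorem stmt_3_general
    (n : ℕ) (φ : ℝ → ℝ)
    (hcont : Continuous φ)
    (hsupp : ∀ x : ℝ, x ∉ Set.Ioo (-(2 : ℝ) ^ (-4 : ℤ)) ((2 : ℝ) ^ (-4 : ℤ)) → φ x = 0)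
    (hmom : ∀ m : ℕ, m ≤ n + 1 → ∫ x : ℝ, x ^ m * φ x = 0)
    (ψ : ℝ → ℝ)
    (A₀ A₁ : ℝ) (c : ℕ → ℝ)
    (hleft : ∀ x ∈ Set.Icc (0 : ℝ) (1 / 2),
      ψ x = A₀ * (x - 1 / 2) ^ n + ∑ j ∈ Finset.range n, c j * (x - 1 / 2) ^ j)
    (hright : ∀ x ∈ Set.Icc (1 / 2 : ℝ) 1,
      ψ x = A₁ * (x - 1 / 2) ^ n + ∑ j ∈ Finset.range n, c j * (x - 1 / 2) ^ j) :
    ∀ x ∈ Set.Icc (1 / 4 : ℝ) (3 / 4),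
      |∫ y : ℝ, φ y * ψ (x - y)| =
        (n.factorial : ℝ) * |A₁ - A₀| * |iterPrim φ (n + 1) (x - 1 / 2)| := by
  have hsupp' : Function.support φ ⊆ Ioo (-(1 / 4)) (1 / 4) := fun y hy => by
    have := not_imp_comm.1 (hsupp y) hy
    norm_num at this ⊢
    constructor <;> linarith [this.1, this.2]
  have hφc : HasCompactSupport φ := HasCompactSupport.of_support_subset_isCompact isCompact_Icc
    (hsupp'.trans Ioo_subset_Icc_self)
  have hφa : ∀ y ≤ -(1 / 4 : ℝ), φ y = 0 := fun y hy =>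
    Function.notMem_support.1 fun h => by linarith [(hsupp' h).1]
  intro x hx
  have hint : Integrable fun y => (x - 1 / 2 - y) ^ n * φ y :=
    (by fun_prop : Continuous _).integrable_of_hasCompactSupport hφc.mul_left
  rw [integral_congr_ae (ae_of_all _ (mul_apply_sub_eq_of_piecewise hsupp' hleft hright hx)),
    integral_add ?_ ((hint.indicator measurableSet_Iic).const_mul _),
    integral_mul_pow_add_sum_eq_zero hcont hφc (fun m hm => hmom m (hm.trans n.le_succ)),
    zero_add, integral_const_mul, integral_indicator measurableSet_Iic,
    iterPrim_succ_eq_setIntegral hcont hφa, abs_mul, abs_div, Nat.abs_cast]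
  · field_simp
  · exact (hcont.mul (by fun_prop)).integrable_of_hasCompactSupport hφc.mul_right

theorem stmt_3
    (n : ℕ) (φ : ℝ → ℝ)
    (hcont : Continuous φ)
    (hsupp : ∀ x : ℝ, x ∉ Set.Ioo (-(2 : ℝ) ^ (-4 : ℤ)) ((2 : ℝ) ^ (-4 : ℤ)) → φ x = 0)
    (hmom : ∀ m : ℕ, m ≤ n + 1 → ∫ x : ℝ, x ^ m * φ x = 0)
    (ψ : ℝ → ℝ) (hψ : MeasureTheory.LocallyIntegrable ψ)
    (A₀ A₁ : ℝ) (c : ℕ → ℝ)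
    (hleft : ∀ x ∈ Set.Icc (0 : ℝ) (1 / 2),
      ψ x = A₀ * (x - 1 / 2) ^ n + ∑ j ∈ Finset.range n, c j * (x - 1 / 2) ^ j)
    (hright : ∀ x ∈ Set.Icc (1 / 2 : ℝ) 1,
      ψ x = A₁ * (x - 1 / 2) ^ n + ∑ j ∈ Finset.range n, c j * (x - 1 / 2) ^ j) :
    ∀ x ∈ Set.Icc (1 / 4 : ℝ) (3 / 4),
      |∫ y : ℝ, φ y * ψ (x - y)| =
        (n.factorial : ℝ) * |A₁ - A₀| * |iterPrim φ (n + 1) (x - 1 / 2)| :=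
  stmt_3_general n φ hcont hsupp hmom ψ A₀ A₁ c hleft hright
end

section
/- Let n ∈ ℕ. Let φ : ℝ → ℝ be continuous, not identically zero, vanishing outside (−2^{−4}, 2^{−4}), with ∫_ℝ x^m φ(x) dx = 0 for every integer 0 ≤ m ≤ n+1. Let ψ : ℝ → ℝ be locally integrable and suppose there are real numbers A_0 ≠ A_1 and c_0,…,c_{n−1} such that ψ(x) = A_0 (x−1/2)^n + Σ_{j=0}^{n−1} c_j (x−1/2)^j for all x ∈ [0, 1/2] and ψ(x) = A_1 (x−1/2)^n + Σ_{j=0}^{n−1} c_j (x−1/2)^j for all x ∈ [1/2, 1]. Then there exist c_0' ∈ (0,1) and a nondegenerate closed interval J ⊆ [1/4, 3/4] such that |(φ*ψ)(x)| ≥ c_0' for all x ∈ J. -/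
open MeasureTheory Set Finset Real

/-!
For `x` near `1/2`, `ψ (x - y)` is a polynomial of degree `n` in `y` plus the kink
`(A₀ - A₁) (x - y - 1/2)^n 1_{x - y < 1/2}`. The vanishing moments of `φ` annihilate the
polynomial, so `(φ * ψ)(x) = ±(A₀ - A₁) G_n (x - 1/2)` with the one-sided moment
`G_k t = truncMoment φ k t = ∫_{y > t} φ y (y - t)^k`. The moments also make `G_n` vanish
outside the support of `φ`, and since `G_{k+1}' = -(k+1) G_k` and `G_0' = -φ`, `G_n ≡ 0` would
force `φ ≡ 0`. Hence `G_n` is nonzero at some `t₀` near `0`, and by continuity `|φ * ψ|` is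
bounded below near `1/2 + t₀`.
-/

open Filter Topology

noncomputable def truncMoment (φ : ℝ → ℝ) (k : ℕ) (t : ℝ) : ℝ :=
  ∫ y in Ioi t, φ y * (y - t) ^ k

theorem truncMoment_succ_eq_integral (φ : ℝ → ℝ) (k : ℕ) (t : ℝ) :
    truncMoment φ (k + 1) t = ∫ y, φ y * max (y - t) 0 ^ (k + 1) := by
  rw [truncMoment, ← integral_indicator measurableSet_Ioi]
  congr 1 with y
  by_cases hy : t < y
  · rw [indicator_of_mem (Set.mem_Ioi.2 hy), max_eq_left (sub_nonneg.2 hy.le)]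
  · rw [indicator_of_notMem (Set.notMem_Ioi.2 (not_lt.1 hy)),
      max_eq_right (sub_nonpos.2 (not_lt.1 hy)), zero_pow k.succ_ne_zero, mul_zero]

theorem hasDerivAt_posPart_sub_pow {y t : ℝ} (hyt : y ≠ t) (k : ℕ) :
    HasDerivAt (fun u => max (y - u) 0 ^ (k + 1))
      (-(k + 1) * (Ioi t).indicator (fun y => (y - t) ^ k) y) t := by
  rcases hyt.lt_or_gt with h | h
  · rw [indicator_of_notMem (Set.notMem_Ioi.2 h.le), mul_zero]
    refine (hasDerivAt_const t (0 : ℝ)).congr_of_eventuallyEq ?_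
    filter_upwards [Ioi_mem_nhds h] with u hu
    rw [max_eq_right (by linarith [Set.mem_Ioi.1 hu]), zero_pow k.succ_ne_zero]
  · rw [indicator_of_mem (Set.mem_Ioi.2 h)]
    have hd : HasDerivAt (fun u => (y - u) ^ (k + 1)) (-(k + 1) * (y - t) ^ k) t :=
      (((hasDerivAt_id t).const_sub y).pow (k + 1)).congr_deriv
        (by rw [add_tsub_cancel_right, id]; push_cast; ring)
    refine hd.congr_of_eventuallyEq ?_
    filter_upwards [Iio_mem_nhds h] with u hu
    rw [max_eq_left (by linarith [Set.mem_Iio.1 hu])]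

theorem abs_posPart_sub_pow_sub_le (k : ℕ) {y t u v : ℝ} (hu : u ∈ Metric.ball t 1)
    (hv : v ∈ Metric.ball t 1) :
    |max (y - u) 0 ^ (k + 1) - max (y - v) 0 ^ (k + 1)| ≤
      (k + 1) * (|y| + |t| + 1) ^ k * |u - v| := by
  have hbound : ∀ w ∈ Metric.ball t 1, |max (y - w) 0| ≤ |y| + |t| + 1 := by
    intro w hw
    rw [Metric.mem_ball, Real.dist_eq] at hw
    rw [abs_of_nonneg (le_max_right _ _)]
    exact max_le (by linarith [(abs_lt.1 hw).1, le_abs_self y, neg_abs_le t]) (by positivity)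
  have hmax : |max (y - u) 0 - max (y - v) 0| ≤ |u - v| := by
    simpa [abs_sub_comm u v] using abs_max_sub_max_le_abs (y - u) (y - v) 0
  calc |max (y - u) 0 ^ (k + 1) - max (y - v) 0 ^ (k + 1)|
      ≤ |max (y - u) 0 - max (y - v) 0| * (k + 1 : ℕ) *
          max (|max (y - u) 0|) (|max (y - v) 0|) ^ (k + 1 - 1) := abs_pow_sub_pow_le ..
    _ ≤ |u - v| * (k + 1 : ℕ) * (|y| + |t| + 1) ^ k := by
      rw [Nat.add_sub_cancel]
      gcongr
      exact max_le (hbound u hu) (hbound v hv)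
    _ = (k + 1) * (|y| + |t| + 1) ^ k * |u - v| := by push_cast; ring

section

variable {φ : ℝ → ℝ} {r : ℝ}

theorem Continuous.integrable_mul_of_hasCompactSupport (hφ : Continuous φ)
    (hφc : HasCompactSupport φ) {p : ℝ → ℝ} (hp : Continuous p) :
    Integrable (fun y => φ y * p y) :=
  (hφ.mul hp).integrable_of_hasCompactSupport hφc.mul_right

theorem hasDerivAt_truncMoment_zero (hφ : Continuous φ) (hφc : HasCompactSupport φ) (t : ℝ) :
    HasDerivAt (truncMoment φ 0) (-φ t) t := by
  have hint : Integrable φ := hφ.integrable_of_hasCompactSupport hφc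
  have heq : truncMoment φ 0 = fun u => (∫ y in Ioi 0, φ y) - ∫ y in (0 : ℝ)..u, φ y := by
    funext u
    rw [← intervalIntegral.integral_Ioi_sub_Ioi' hint.integrableOn hint.integrableOn]
    simp [truncMoment]
  rw [heq]
  exact ((hφ.integral_hasStrictDerivAt 0 t).hasDerivAt).const_sub _

theorem hasDerivAt_truncMoment_succ (hφ : Continuous φ) (hφc : HasCompactSupport φ) (k : ℕ)
    (t : ℝ) : HasDerivAt (truncMoment φ (k + 1)) (-(k + 1) * truncMoment φ k t) t := by
  set bound : ℝ → ℝ := fun y => |φ y| * ((k + 1) * (|y| + |t| + 1) ^ k)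
  have hlip : ∀ y, LipschitzOnWith (Real.nnabs (bound y))
      (fun u => φ y * max (y - u) 0 ^ (k + 1)) (Metric.ball t 1) := by
    intro y
    refine LipschitzOnWith.of_dist_le_mul fun u hu v hv => ?_
    rw [Real.dist_eq, Real.dist_eq, Real.coe_nnabs, ← mul_sub, abs_mul,
      abs_of_nonneg (by positivity : 0 ≤ bound y), mul_assoc]
    exact mul_le_mul_of_nonneg_left (abs_posPart_sub_pow_sub_le k hu hv) (abs_nonneg _)
  have hderiv : ∀ᵐ y, HasDerivAt (fun u => φ y * max (y - u) 0 ^ (k + 1))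
      (-(k + 1) * (Ioi t).indicator (fun y => φ y * (y - t) ^ k) y) t := by
    filter_upwards [Measure.ae_ne volume t] with y hy
    refine ((hasDerivAt_posPart_sub_pow hy k).const_mul (φ y)).congr_deriv ?_
    rw [indicator_apply, indicator_apply]
    split_ifs <;> ring
  have key := hasDerivAt_integral_of_dominated_loc_of_lip
    (F := fun u y => φ y * max (y - u) 0 ^ (k + 1))
    (F' := fun y => -(k + 1) * (Ioi t).indicator (fun y => φ y * (y - t) ^ k) y)
    (Metric.ball_mem_nhds t one_pos)
    (Eventually.of_forall fun u => (hφ.mul (by fun_prop)).aestronglyMeasurable)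
    (hφ.integrable_mul_of_hasCompactSupport hφc (by fun_prop))
    ((((hφ.mul (by fun_prop)).aestronglyMeasurable).indicator measurableSet_Ioi).const_mul _)
    (Eventually.of_forall hlip)
    ((hφ.abs.mul (by fun_prop)).integrable_of_hasCompactSupport hφc.abs.mul_right)
    hderiv
  rw [funext (truncMoment_succ_eq_integral φ k)]
  refine key.2.congr_deriv ?_
  rw [integral_const_mul, integral_indicator measurableSet_Ioi, truncMoment]

theorem continuous_truncMoment (hφ : Continuous φ) (hφc : HasCompactSupport φ) (k : ℕ) :
    Continuous (truncMoment φ k) := by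
  refine continuous_iff_continuousAt.2 fun t => ?_
  cases k with
  | zero => exact (hasDerivAt_truncMoment_zero hφ hφc t).continuousAt
  | succ k => exact (hasDerivAt_truncMoment_succ hφ hφc k t).continuousAt

theorem eq_zero_of_truncMoment_eq_zero (hφ : Continuous φ) (hφc : HasCompactSupport φ) {k : ℕ}
    (h : truncMoment φ k = 0) : φ = 0 := by
  induction k with
  | zero =>
    funext x
    have hd := hasDerivAt_truncMoment_zero hφ hφc x
    rw [h] at hd
    simpa using hd.unique (hasDerivAt_const x 0)
  | succ k ih =>
    refine ih (funext fun t => ?_)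
    have hd := hasDerivAt_truncMoment_succ hφ hφc k t
    rw [h] at hd
    have hk : -((k : ℝ) + 1) ≠ 0 := neg_ne_zero.2 (by positivity)
    exact (mul_eq_zero.1 (hd.unique (hasDerivAt_const t 0))).resolve_left hk

theorem integral_mul_sub_pow_eq_zero_s4 (hφ : Continuous φ) (hφc : HasCompactSupport φ) {N : ℕ}
    (hmom : ∀ m ≤ N, ∫ x, x ^ m * φ x = 0) {j : ℕ} (hj : j ≤ N) (a : ℝ) :
    ∫ y, φ y * (a - y) ^ j = 0 := by
  have hexpand : (fun y => φ y * (a - y) ^ j) = fun y => ∑ i ∈ range (j + 1),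
      ((-1) ^ (i + j) * a ^ i * j.choose i) * (y ^ (j - i) * φ y) := by
    funext y
    rw [sub_pow, Finset.mul_sum]
    exact Finset.sum_congr rfl fun i _ => by ring
  rw [hexpand, integral_finsetSum]
  · refine Finset.sum_eq_zero fun i _ => ?_
    rw [integral_const_mul, hmom (j - i) (by omega), mul_zero]
  · intro i _
    exact (((continuous_pow _).mul hφ).integrable_of_hasCompactSupport hφc.mul_left).const_mul _

theorem truncMoment_eq_zero_of_lt (hφ : Continuous φ)
    (hsupp : Function.support φ ⊆ Set.Icc (-r) r) {k : ℕ}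
    (hmom : ∀ m ≤ k, ∫ x, x ^ m * φ x = 0) {t : ℝ} (ht : t < -r) :
    truncMoment φ k t = 0 := by
  have hφc : HasCompactSupport φ := .of_support_subset_isCompact isCompact_Icc hsupp
  have hout : ∀ y ∉ Ioi t, φ y * (y - t) ^ k = 0 := fun y hy => by
    rw [Function.notMem_support.1 fun h => hy ((hsupp h).1.trans_lt' ht), zero_mul]
  have hflip : ∀ y, φ y * (y - t) ^ k = (-1) ^ k * (φ y * (t - y) ^ k) := fun y => by
    rw [← neg_sub, neg_pow]; ring
  rw [truncMoment, setIntegral_eq_integral_of_forall_compl_eq_zero hout, funext hflip,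
    integral_const_mul, integral_mul_sub_pow_eq_zero_s4 hφ hφc hmom le_rfl, mul_zero]

theorem truncMoment_eq_zero_of_le (hsupp : Function.support φ ⊆ Set.Icc (-r) r) (k : ℕ) {t : ℝ}
    (ht : r ≤ t) : truncMoment φ k t = 0 :=
  setIntegral_eq_zero_of_forall_eq_zero fun y hy => by
    rw [Function.notMem_support.1 fun h => (hsupp h).2.not_gt (ht.trans_lt hy), zero_mul]

theorem exists_truncMoment_ne_zero (hφ : Continuous φ) (hφ0 : φ ≠ 0)
    (hsupp : Function.support φ ⊆ Set.Icc (-r) r) {k : ℕ}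
    (hmom : ∀ m ≤ k, ∫ x, x ^ m * φ x = 0) : ∃ t ∈ Set.Ico (-r) r, truncMoment φ k t ≠ 0 := by
  by_contra! h
  have hφc : HasCompactSupport φ := .of_support_subset_isCompact isCompact_Icc hsupp
  refine hφ0 (eq_zero_of_truncMoment_eq_zero hφ hφc (k := k) (funext fun t => ?_))
  rcases lt_or_ge t (-r) with hlt | hge
  · exact truncMoment_eq_zero_of_lt hφ hsupp hmom hlt
  rcases lt_or_ge t r with hlt' | hge'
  · exact h t ⟨hge, hlt'⟩
  · exact truncMoment_eq_zero_of_le hsupp k hge'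

variable {ψ : ℝ → ℝ} {n : ℕ} {l a u A₀ A₁ : ℝ} {c : ℕ → ℝ}

theorem eq_add_indicator_of_piecewise
    (hleft : ∀ z ∈ Set.Icc l a, ψ z = A₀ * (z - a) ^ n + ∑ j ∈ range n, c j * (z - a) ^ j)
    (hright : ∀ z ∈ Set.Icc a u, ψ z = A₁ * (z - a) ^ n + ∑ j ∈ range n, c j * (z - a) ^ j)
    {z : ℝ} (hz : z ∈ Set.Icc l u) :
    ψ z = A₁ * (z - a) ^ n + ∑ j ∈ range n, c j * (z - a) ^ j +
      (A₀ - A₁) * (Iio a).indicator (fun z => (z - a) ^ n) z := by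
  by_cases hza : z < a
  · rw [hleft z ⟨hz.1, hza.le⟩, indicator_of_mem (Set.mem_Iio.2 hza)]
    ring
  · rw [hright z ⟨not_lt.1 hza, hz.2⟩, indicator_of_notMem (Set.notMem_Iio.2 (not_lt.1 hza))]
    ring

theorem integral_mul_piecewise_eq_truncMoment (hφ : Continuous φ)
    (hsupp : Function.support φ ⊆ Set.Icc (-r) r) (hmom : ∀ m ≤ n, ∫ x, x ^ m * φ x = 0)
    (hleft : ∀ z ∈ Set.Icc l a, ψ z = A₀ * (z - a) ^ n + ∑ j ∈ range n, c j * (z - a) ^ j)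
    (hright : ∀ z ∈ Set.Icc a u, ψ z = A₁ * (z - a) ^ n + ∑ j ∈ range n, c j * (z - a) ^ j)
    {x : ℝ} (hlx : l ≤ x - r) (hxu : x + r ≤ u) :
    ∫ y, φ y * ψ (x - y) = (A₀ - A₁) * (-1) ^ n * truncMoment φ n (x - a) := by
  have hφc : HasCompactSupport φ := .of_support_subset_isCompact isCompact_Icc hsupp
  set t := x - a
  have hpoint : ∀ y, φ y * ψ (x - y) =
      φ y * (A₁ * (t - y) ^ n + ∑ j ∈ range n, c j * (t - y) ^ j) +
        (A₀ - A₁) * (-1) ^ n * (Ioi t).indicator (fun y => φ y * (y - t) ^ n) y := by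
    intro y
    by_cases hy : φ y = 0
    · simp [hy]
    have hyr := hsupp hy
    have hshift : x - y - a = t - y := by ring
    rw [eq_add_indicator_of_piecewise hleft hright ⟨by linarith [hyr.2], by linarith [hyr.1]⟩,
      hshift]
    by_cases hty : t < y
    · rw [indicator_of_mem (show x - y ∈ Iio a by simp only [Set.mem_Iio]; linarith),
        indicator_of_mem (Set.mem_Ioi.2 hty), hshift, ← neg_sub y t, neg_pow]
      ring
    · rw [indicator_of_notMem (show x - y ∉ Iio a by simp only [Set.mem_Iio]; linarith),
        indicator_of_notMem (Set.notMem_Ioi.2 (not_lt.1 hty))]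
      ring
  have hint : ∀ j (b : ℝ), Integrable fun y => b * (φ y * (t - y) ^ j) := fun j b =>
    (hφ.integrable_mul_of_hasCompactSupport hφc (by fun_prop)).const_mul _
  have hmoment : ∀ j ≤ n, ∫ y, φ y * (t - y) ^ j = 0 := fun j hj =>
    integral_mul_sub_pow_eq_zero_s4 hφ hφc hmom hj t
  have hpoly : ∫ y, φ y * (A₁ * (t - y) ^ n + ∑ j ∈ range n, c j * (t - y) ^ j) = 0 := by
    simp_rw [mul_add, Finset.mul_sum, mul_left_comm (φ _)]
    rw [integral_add (hint n A₁) (integrable_finsetSum _ fun j _ => hint j (c j)),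
      integral_finsetSum _ fun j _ => hint j (c j), integral_const_mul, hmoment n le_rfl, mul_zero,
      zero_add]
    exact Finset.sum_eq_zero fun j hj => by
      rw [integral_const_mul, hmoment j (Finset.mem_range.1 hj).le, mul_zero]
  have htail : Integrable fun y => (Ioi t).indicator (fun y => φ y * (y - t) ^ n) y :=
    (hφ.integrable_mul_of_hasCompactSupport hφc (by fun_prop)).indicator measurableSet_Ioi
  rw [funext hpoint, integral_add (hφ.integrable_mul_of_hasCompactSupport hφc (by fun_prop))
    (htail.const_mul _), hpoly, zero_add, integral_const_mul,
    integral_indicator measurableSet_Ioi, truncMoment]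

end

theorem exists_Icc_subset_half_abs_le {f : ℝ → ℝ} {x₀ : ℝ} (hf : ContinuousAt f x₀)
    (hfx₀ : f x₀ ≠ 0) {s : Set ℝ} (hs : s ∈ 𝓝 x₀) :
    ∃ a b, a < b ∧ Set.Icc a b ⊆ s ∧ ∀ x ∈ Set.Icc a b, |f x₀| / 2 ≤ |f x| := by
  have hU : s ∩ {x | |f x₀| / 2 < |f x|} ∈ 𝓝 x₀ :=
    inter_mem hs (hf.abs.eventually (lt_mem_nhds (half_lt_self (abs_pos.2 hfx₀))))
  obtain ⟨ε, hε, hball⟩ := Metric.mem_nhds_iff.1 hU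
  have hIcc : Set.Icc (x₀ - ε / 2) (x₀ + ε / 2) ⊆ s ∩ {x | |f x₀| / 2 < |f x|} := fun x hx => by
    refine hball (Metric.mem_ball.2 (abs_lt.2 ⟨?_, ?_⟩)) <;> linarith [hx.1, hx.2]
  exact ⟨x₀ - ε / 2, x₀ + ε / 2, by linarith, fun x hx => (hIcc hx).1,
    fun x hx => (hIcc hx).2.le⟩

theorem stmt_4_general
    (n : ℕ) (φ : ℝ → ℝ)
    (hcont : Continuous φ) (hne : ∃ x : ℝ, φ x ≠ 0)
    (hsupp : ∀ x : ℝ, x ∉ Set.Ioo (-(2 : ℝ) ^ (-4 : ℤ)) ((2 : ℝ) ^ (-4 : ℤ)) → φ x = 0)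
    (hmom : ∀ m : ℕ, m ≤ n + 1 → ∫ x : ℝ, x ^ m * φ x = 0)
    (ψ : ℝ → ℝ)
    (A₀ A₁ : ℝ) (hA : A₀ ≠ A₁) (c : ℕ → ℝ)
    (hleft : ∀ x ∈ Set.Icc (0 : ℝ) (1 / 2),
      ψ x = A₀ * (x - 1 / 2) ^ n + ∑ j ∈ Finset.range n, c j * (x - 1 / 2) ^ j)
    (hright : ∀ x ∈ Set.Icc (1 / 2 : ℝ) 1,
      ψ x = A₁ * (x - 1 / 2) ^ n + ∑ j ∈ Finset.range n, c j * (x - 1 / 2) ^ j) :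
    ∃ c₀ ∈ Set.Ioo (0 : ℝ) 1, ∃ a b : ℝ, a < b ∧
      Set.Icc a b ⊆ Set.Icc (1 / 4 : ℝ) (3 / 4) ∧
      ∀ x ∈ Set.Icc a b, c₀ ≤ |∫ y : ℝ, φ y * ψ (x - y)| := by
  set r : ℝ := (2 : ℝ) ^ (-4 : ℤ)
  have hr : r < 1 / 4 := by norm_num [r]
  clear_value r
  have hsupp' : Function.support φ ⊆ Set.Icc (-r) r := fun x hx =>
    Ioo_subset_Icc_self (not_not.1 fun h => hx (hsupp x h))
  have hφc : HasCompactSupport φ := .of_support_subset_isCompact isCompact_Icc hsupp'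
  have hmom' : ∀ m ≤ n, ∫ x, x ^ m * φ x = 0 := fun m hm => hmom m (by omega)
  have hφ0 : φ ≠ 0 := fun h => hne.elim fun x hx => hx (congrFun h x)
  obtain ⟨t₀, ht₀, hGt₀⟩ := exists_truncMoment_ne_zero hcont hφ0 hsupp' hmom'
  set f : ℝ → ℝ := fun x => (A₀ - A₁) * (-1) ^ n * truncMoment φ n (x - 1 / 2)
  have hf : Continuous f := by
    have := continuous_truncMoment hcont hφc n
    fun_prop
  have hfx₀ : f (t₀ + 1 / 2) ≠ 0 := by simp [f, sub_ne_zero.2 hA, hGt₀]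
  have hnhds : Set.Icc (1 / 4 : ℝ) (3 / 4) ∈ 𝓝 (t₀ + 1 / 2) :=
    Icc_mem_nhds (by linarith [ht₀.1]) (by linarith [ht₀.2])
  obtain ⟨a, b, hab, hsub, hle⟩ := exists_Icc_subset_half_abs_le hf.continuousAt hfx₀ hnhds
  refine ⟨min (|f (t₀ + 1 / 2)| / 2) (1 / 2),
    ⟨lt_min (by positivity) (by norm_num), (min_le_right _ _).trans_lt (by norm_num)⟩,
    a, b, hab, hsub, fun x hx => ?_⟩
  rw [integral_mul_piecewise_eq_truncMoment hcont hsupp' hmom' hleft hright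
    (by linarith [(hsub hx).1]) (by linarith [(hsub hx).2])]
  exact (min_le_left _ _).trans (hle x hx)

theorem stmt_4
    (n : ℕ) (φ : ℝ → ℝ)
    (hcont : Continuous φ) (hne : ∃ x : ℝ, φ x ≠ 0)
    (hsupp : ∀ x : ℝ, x ∉ Set.Ioo (-(2 : ℝ) ^ (-4 : ℤ)) ((2 : ℝ) ^ (-4 : ℤ)) → φ x = 0)
    (hmom : ∀ m : ℕ, m ≤ n + 1 → ∫ x : ℝ, x ^ m * φ x = 0)
    (ψ : ℝ → ℝ) (hψ : MeasureTheory.LocallyIntegrable ψ)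
    (A₀ A₁ : ℝ) (hA : A₀ ≠ A₁) (c : ℕ → ℝ)
    (hleft : ∀ x ∈ Set.Icc (0 : ℝ) (1 / 2),
      ψ x = A₀ * (x - 1 / 2) ^ n + ∑ j ∈ Finset.range n, c j * (x - 1 / 2) ^ j)
    (hright : ∀ x ∈ Set.Icc (1 / 2 : ℝ) 1,
      ψ x = A₁ * (x - 1 / 2) ^ n + ∑ j ∈ Finset.range n, c j * (x - 1 / 2) ^ j) :
    ∃ c₀ ∈ Set.Ioo (0 : ℝ) 1, ∃ a b : ℝ, a < b ∧
      Set.Icc a b ⊆ Set.Icc (1 / 4 : ℝ) (3 / 4) ∧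
      ∀ x ∈ Set.Icc a b, c₀ ≤ |∫ y : ℝ, φ y * ψ (x - y)| :=
  stmt_4_general n φ hcont hne hsupp hmom ψ A₀ A₁ hA c hleft hright
end

section
/- Let n ∈ ℕ. Let φ : ℝ → ℝ be continuous, not identically zero, vanishing outside (−2^{−4}, 2^{−4}), with ∫_ℝ x^m φ(x) dx = 0 for every integer 0 ≤ m ≤ n+1, and set φ_k(y) = 2^k φ(2^k y) for k ∈ ℕ. Let ψ : ℝ → ℝ be locally integrable and suppose there are real numbers A_0 ≠ A_1 and c_0,…,c_{n−1} such that ψ(x) = A_0 (x−1/2)^n + Σ_{j=0}^{n−1} c_j (x−1/2)^j on [0, 1/2] and ψ(x) = A_1 (x−1/2)^n + Σ_{j=0}^{n−1} c_j (x−1/2)^j on [1/2, 1]. Then there exist c_0' ∈ (0,1) and a nondegenerate closed interval J ⊆ [1/4, 3/4] such that for every k ∈ ℕ, every m ∈ ℤ, and every x ∈ 2^{−k} m + 2^{−k} J, one has |(φ_k * ψ_{k,m})(x)| ≥ c_0', where ψ_{k,m}(y) = ψ(2^k y − m). -/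
open MeasureTheory Set Finset Real

/-!
After the substitution `u = 2^k y`, the convolution at `2^{-k} (m + t)` equals
`∫ φ(u) ψ(t - u) du`, whatever `k` and `m`. For `t ∈ [1/4, 3/4]` only the values of `ψ` on
`[0, 1]` enter, and there `ψ(x) = P(x - 1/2) + (A₁ - A₀) (x - 1/2)₊ⁿ` with `P` a polynomial of
degree at most `n`. The vanishing moments of `φ` kill `P`, leaving `(A₁ - A₀) H(t - 1/2)` with
`H(s) = ∫_{u ≤ s} φ(u) (s - u)ⁿ du`, which is `n!` times an `(n + 1)`-fold primitive of `φ`.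
If `H` vanished on `(-1/4, 1/4)`, differentiating `n + 1` times would give `φ = 0` there, hence
everywhere. So `|H|` is bounded below on a closed interval around a point where `H ≠ 0`, and `J`
is that interval shifted by `1/2`.
-/

/-- `j!` times the `(j + 1)`-fold primitive of `f` vanishing at `a`
(Cauchy's formula for repeated integration). -/
noncomputable def cauchyPrimitive (f : ℝ → ℝ) (a : ℝ) (j : ℕ) (s : ℝ) : ℝ :=
  ∫ u in a..s, f u * (s - u) ^ j

/- Both the derivative formula for `cauchyPrimitive` and the vanishing of `∫ f u * (s - u) ^ j`
go by induction on `j` through this identity, which trades `f` for `u ↦ u * f u`. -/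
lemma mul_sub_pow_succ_eq (f : ℝ → ℝ) (s u : ℝ) (j : ℕ) :
    f u * (s - u) ^ (j + 1) = s * (f u * (s - u) ^ j) - u * f u * (s - u) ^ j := by
  ring

section CauchyPrimitive

variable {f : ℝ → ℝ} (a : ℝ)

lemma cauchyPrimitive_succ (hf : Continuous f) (j : ℕ) (s : ℝ) :
    cauchyPrimitive f a (j + 1) s =
      s * cauchyPrimitive f a j s - cauchyPrimitive (fun u ↦ u * f u) a j s := by
  simp only [cauchyPrimitive, mul_sub_pow_succ_eq f s]
  rw [intervalIntegral.integral_sub, intervalIntegral.integral_const_mul] <;>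
    exact Continuous.intervalIntegrable (by fun_prop) _ _

lemma hasDerivAt_cauchyPrimitive_zero (hf : Continuous f) (s : ℝ) :
    HasDerivAt (cauchyPrimitive f a 0) (f s) s := by
  have h0 : cauchyPrimitive f a 0 = fun s ↦ ∫ u in a..s, f u := by
    ext s; simp [cauchyPrimitive]
  exact h0 ▸ (hf.integral_hasStrictDerivAt a s).hasDerivAt

lemma hasDerivAt_cauchyPrimitive_succ_of (hf : Continuous f) {j : ℕ} {s d₁ d₂ : ℝ}
    (h₁ : HasDerivAt (cauchyPrimitive f a j) d₁ s)
    (h₂ : HasDerivAt (cauchyPrimitive (fun u ↦ u * f u) a j) d₂ s) :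
    HasDerivAt (cauchyPrimitive f a (j + 1)) (cauchyPrimitive f a j s + s * d₁ - d₂) s := by
  rw [show cauchyPrimitive f a (j + 1) = _ from funext (cauchyPrimitive_succ a hf j)]
  simpa only [one_mul] using ((hasDerivAt_id' s).fun_mul h₁).fun_sub h₂

lemma hasDerivAt_cauchyPrimitive_succ (hf : Continuous f) (j : ℕ) (s : ℝ) :
    HasDerivAt (cauchyPrimitive f a (j + 1)) ((j + 1) * cauchyPrimitive f a j s) s := by
  induction j generalizing f with
  | zero =>
    convert hasDerivAt_cauchyPrimitive_succ_of a hf (hasDerivAt_cauchyPrimitive_zero a hf s)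
      (hasDerivAt_cauchyPrimitive_zero a (f := fun u ↦ u * f u) (by fun_prop) s) using 1
    ring
  | succ j ih =>
    convert hasDerivAt_cauchyPrimitive_succ_of a hf (ih hf)
      (ih (f := fun u ↦ u * f u) (by fun_prop)) using 1
    rw [cauchyPrimitive_succ a hf]
    push_cast
    ring

lemma continuous_cauchyPrimitive (hf : Continuous f) (j : ℕ) :
    Continuous (cauchyPrimitive f a j) := by
  refine continuous_iff_continuousAt.2 fun s ↦ ?_
  cases j with
  | zero => exact (hasDerivAt_cauchyPrimitive_zero a hf s).continuousAt
  | succ j => exact (hasDerivAt_cauchyPrimitive_succ a hf j s).continuousAt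

end CauchyPrimitive

lemma HasDerivAt.eq_zero_of_eqOn_zero {g : ℝ → ℝ} {U : Set ℝ} {s d : ℝ} (hU : IsOpen U)
    (hg : EqOn g 0 U) (hs : s ∈ U) (h : HasDerivAt g d s) : d = 0 :=
  h.unique ((hasDerivAt_const s 0).congr_of_eventuallyEq
    (Filter.eventuallyEq_of_mem (hU.mem_nhds hs) hg))

lemma eqOn_zero_of_cauchyPrimitive_eqOn_zero {f : ℝ → ℝ} {U : Set ℝ} (hf : Continuous f)
    (hU : IsOpen U) (a : ℝ) (j : ℕ) (h : EqOn (cauchyPrimitive f a j) 0 U) : EqOn f 0 U := by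
  induction j with
  | zero => exact fun s hs ↦ (hasDerivAt_cauchyPrimitive_zero a hf s).eq_zero_of_eqOn_zero hU h hs
  | succ j ih =>
    refine ih fun s hs ↦ ?_
    have := (hasDerivAt_cauchyPrimitive_succ a hf j s).eq_zero_of_eqOn_zero hU h hs
    exact (mul_eq_zero.1 this).resolve_left (by positivity)

lemma integral_mul_sub_pow_eq_zero_s5 {f : ℝ → ℝ} {N j : ℕ} (hf : Continuous f)
    (hfc : HasCompactSupport f) (hmom : ∀ i ≤ N, ∫ u, u ^ i * f u = 0) (hj : j ≤ N) (s : ℝ) :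
    ∫ u, f u * (s - u) ^ j = 0 := by
  induction j generalizing f N with
  | zero => simpa [mul_comm] using hmom 0 (Nat.zero_le N)
  | succ j ih =>
    obtain ⟨N, rfl⟩ : ∃ N', N = N' + 1 := ⟨N - 1, by omega⟩
    have hmom' : ∀ i ≤ N, ∫ u, u ^ i * (u * f u) = 0 := fun i hi ↦ by
      simpa [pow_succ, mul_assoc] using hmom (i + 1) (by omega)
    have hint₁ : Integrable fun u ↦ f u * (s - u) ^ j :=
      Continuous.integrable_of_hasCompactSupport (by fun_prop) hfc.mul_right
    have hint₂ : Integrable fun u ↦ u * f u * (s - u) ^ j :=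
      Continuous.integrable_of_hasCompactSupport (by fun_prop) hfc.mul_left.mul_right
    simp only [mul_sub_pow_succ_eq f s]
    rw [integral_sub (hint₁.const_mul s) hint₂, integral_const_mul, ih hf hfc hmom (by omega),
      ih (f := fun u ↦ u * f u) (by fun_prop) hfc.mul_left hmom' (by omega), mul_zero, sub_zero]

lemma integral_mul_poly_sub_eq_zero {φ : ℝ → ℝ} {n : ℕ} (hφ : Continuous φ)
    (hφc : HasCompactSupport φ) (hmom : ∀ i ≤ n, ∫ u, u ^ i * φ u = 0) (A : ℝ) (c : ℕ → ℝ)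
    (s : ℝ) :
    ∫ u, φ u * (A * (s - u) ^ n + ∑ j ∈ range n, c j * (s - u) ^ j) = 0 := by
  have hint : ∀ j, Integrable fun u ↦ φ u * (s - u) ^ j := fun j ↦
    Continuous.integrable_of_hasCompactSupport (by fun_prop) hφc.mul_right
  have hvanish : ∀ j ≤ n, ∫ u, φ u * (s - u) ^ j = 0 := fun j hj ↦
    integral_mul_sub_pow_eq_zero_s5 hφ hφc hmom hj s
  simp only [mul_add, Finset.mul_sum, mul_left_comm (φ _)]
  rw [integral_add ((hint n).const_mul A) (integrable_finsetSum _ fun j _ ↦ (hint j).const_mul _),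
    integral_const_mul, hvanish n le_rfl, mul_zero, zero_add,
    integral_finsetSum _ fun j _ ↦ (hint j).const_mul _]
  exact Finset.sum_eq_zero fun j hj ↦ by
    rw [integral_const_mul, hvanish j (mem_range.1 hj).le, mul_zero]

lemma mul_comp_sub_eq_of_support_subset {φ ψ : ℝ → ℝ} {n : ℕ} {r t : ℝ}
    (hsupp : Function.support φ ⊆ Ioo (-r) r) (ht : t ∈ Icc r (1 - r))
    (A₀ A₁ : ℝ) (c : ℕ → ℝ)
    (hleft : ∀ x ∈ Icc (0 : ℝ) (1 / 2),
      ψ x = A₀ * (x - 1 / 2) ^ n + ∑ j ∈ range n, c j * (x - 1 / 2) ^ j)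
    (hright : ∀ x ∈ Icc (1 / 2 : ℝ) 1,
      ψ x = A₁ * (x - 1 / 2) ^ n + ∑ j ∈ range n, c j * (x - 1 / 2) ^ j) (u : ℝ) :
    φ u * ψ (t - u) =
      φ u * (A₀ * (t - 1 / 2 - u) ^ n + ∑ j ∈ range n, c j * (t - 1 / 2 - u) ^ j) +
        (A₁ - A₀) * (Ioc (-1) (t - 1 / 2)).indicator (fun v ↦ φ v * (t - 1 / 2 - v) ^ n) u := by
  by_cases hu : φ u = 0
  · simp [indicator_apply, hu]
  obtain ⟨hu₁, hu₂⟩ := hsupp hu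
  have harg : t - u - 1 / 2 = t - 1 / 2 - u := by ring
  rcases le_or_gt u (t - 1 / 2) with hle | hlt
  · rw [hright _ ⟨by linarith, by linarith [ht.2]⟩, harg,
      indicator_of_mem (show u ∈ Ioc (-1) (t - 1 / 2) from ⟨by linarith [ht.1, ht.2], hle⟩)]
    ring
  · rw [hleft _ ⟨by linarith [ht.1], by linarith⟩, harg,
      indicator_of_notMem fun h ↦ (not_le.2 hlt) h.2]
    ring

lemma integral_mul_comp_sub_eq_cauchyPrimitive {φ ψ : ℝ → ℝ} {n : ℕ} {r t : ℝ}
    (hφ : Continuous φ) (hr : 0 ≤ r) (hsupp : Function.support φ ⊆ Ioo (-r) r)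
    (hmom : ∀ i ≤ n, ∫ u, u ^ i * φ u = 0) (ht : t ∈ Icc r (1 - r))
    (A₀ A₁ : ℝ) (c : ℕ → ℝ)
    (hleft : ∀ x ∈ Icc (0 : ℝ) (1 / 2),
      ψ x = A₀ * (x - 1 / 2) ^ n + ∑ j ∈ range n, c j * (x - 1 / 2) ^ j)
    (hright : ∀ x ∈ Icc (1 / 2 : ℝ) 1,
      ψ x = A₁ * (x - 1 / 2) ^ n + ∑ j ∈ range n, c j * (x - 1 / 2) ^ j) :
    ∫ u, φ u * ψ (t - u) = (A₁ - A₀) * cauchyPrimitive φ (-1) n (t - 1 / 2) := by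
  have hφc : HasCompactSupport φ := HasCompactSupport.intro (isCompact_Icc (a := -r) (b := r))
    fun x hx ↦ Function.notMem_support.1 fun h ↦ hx (Ioo_subset_Icc_self (hsupp h))
  have hint : Integrable fun v ↦ φ v * (t - 1 / 2 - v) ^ n :=
    Continuous.integrable_of_hasCompactSupport (by fun_prop) hφc.mul_right
  have hint_poly : Integrable fun u ↦
      φ u * (A₀ * (t - 1 / 2 - u) ^ n + ∑ j ∈ range n, c j * (t - 1 / 2 - u) ^ j) :=
    Continuous.integrable_of_hasCompactSupport (by fun_prop) hφc.mul_right
  simp_rw [mul_comp_sub_eq_of_support_subset hsupp ht A₀ A₁ c hleft hright]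
  rw [integral_add hint_poly ((hint.indicator measurableSet_Ioc).const_mul _),
    integral_mul_poly_sub_eq_zero hφ hφc hmom, zero_add, integral_const_mul,
    integral_indicator measurableSet_Ioc, cauchyPrimitive,
    intervalIntegral.integral_of_le (by linarith [ht.1])]

lemma integral_dilate_mul_comp_sub (φ ψ : ℝ → ℝ) {l : ℝ} (hl : 0 < l) (x m : ℝ) :
    ∫ y, l * φ (l * y) * ψ (l * (x - y) - m) = ∫ u, φ u * ψ (l * x - m - u) := by
  have harg : ∀ y, l * (x - y) - m = l * x - m - l * y := fun y ↦ by ring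
  simp_rw [harg, mul_assoc]
  rw [integral_const_mul, Measure.integral_comp_mul_left (fun u ↦ φ u * ψ (l * x - m - u)),
    smul_eq_mul, abs_of_pos (inv_pos.2 hl), mul_inv_cancel_left₀ hl.ne']

lemma Continuous.exists_Icc_forall_le_abs {g : ℝ → ℝ} (hg : Continuous g) {U : Set ℝ}
    (hU : IsOpen U) {x₀ : ℝ} (hx₀ : x₀ ∈ U) (h : g x₀ ≠ 0) :
    ∃ ε > 0, ∃ a b, a < b ∧ Set.Icc a b ⊆ U ∧ ∀ x ∈ Set.Icc a b, ε ≤ |g x| := by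
  have hV : IsOpen (U ∩ {x | |g x₀| / 2 < |g x|}) :=
    hU.inter (isOpen_lt continuous_const (continuous_abs.comp hg))
  have hpos : 0 < |g x₀| := abs_pos.2 h
  obtain ⟨δ, hδ, hball⟩ :=
    Metric.isOpen_iff.1 hV x₀ ⟨hx₀, show |g x₀| / 2 < |g x₀| by linarith⟩
  have hIcc : Set.Icc (x₀ - δ / 2) (x₀ + δ / 2) ⊆ U ∩ {x | |g x₀| / 2 < |g x|} := by
    rw [← Real.closedBall_eq_Icc]
    exact (Metric.closedBall_subset_ball (half_lt_self hδ)).trans hball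
  exact ⟨|g x₀| / 2, by positivity, x₀ - δ / 2, x₀ + δ / 2, by linarith,
    fun x hx ↦ (hIcc hx).1, fun x hx ↦ (hIcc hx).2.le⟩

theorem stmt_5_general
    (n : ℕ) (φ : ℝ → ℝ)
    (hcont : Continuous φ) (hne : ∃ x : ℝ, φ x ≠ 0)
    (hsupp : ∀ x : ℝ, x ∉ Set.Ioo (-(2 : ℝ) ^ (-4 : ℤ)) ((2 : ℝ) ^ (-4 : ℤ)) → φ x = 0)
    (hmom : ∀ m : ℕ, m ≤ n + 1 → ∫ x : ℝ, x ^ m * φ x = 0)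
    (ψ : ℝ → ℝ)
    (A₀ A₁ : ℝ) (hA : A₀ ≠ A₁) (c : ℕ → ℝ)
    (hleft : ∀ x ∈ Set.Icc (0 : ℝ) (1 / 2),
      ψ x = A₀ * (x - 1 / 2) ^ n + ∑ j ∈ Finset.range n, c j * (x - 1 / 2) ^ j)
    (hright : ∀ x ∈ Set.Icc (1 / 2 : ℝ) 1,
      ψ x = A₁ * (x - 1 / 2) ^ n + ∑ j ∈ Finset.range n, c j * (x - 1 / 2) ^ j) :
    ∃ c₀ ∈ Set.Ioo (0 : ℝ) 1, ∃ a b : ℝ, a < b ∧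
      Set.Icc a b ⊆ Set.Icc (1 / 4 : ℝ) (3 / 4) ∧
      ∀ k : ℕ, ∀ m : ℤ, ∀ x : ℝ,
        (∃ t ∈ Set.Icc a b, x = (2 : ℝ) ^ (-(k : ℤ)) * ((m : ℝ) + t)) →
        c₀ ≤ |∫ y : ℝ, (2 : ℝ) ^ (k : ℕ) * φ ((2 : ℝ) ^ (k : ℕ) * y) *
                ψ ((2 : ℝ) ^ (k : ℕ) * (x - y) - (m : ℝ))| := by
  have hsupp' : Function.support φ ⊆ Ioo (-(1 / 16)) (1 / 16) := fun x hx ↦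
    by_contra fun h ↦ hx (hsupp x (by norm_num at h ⊢; exact h))
  obtain ⟨s₀, hs₀, hH⟩ : ∃ s₀ ∈ Ioo (-(1 / 4) : ℝ) (1 / 4), cauchyPrimitive φ (-1) n s₀ ≠ 0 := by
    by_contra! h
    obtain ⟨x, hx⟩ := hne
    have hxU : x ∈ Ioo (-(1 / 4) : ℝ) (1 / 4) := by
      obtain ⟨h₁, h₂⟩ := hsupp' hx; constructor <;> linarith
    exact hx (eqOn_zero_of_cauchyPrimitive_eqOn_zero hcont isOpen_Ioo (-1) n h hxU)
  obtain ⟨ε, hε, a, b, hab, habU, hbound⟩ :=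
    (continuous_cauchyPrimitive (-1) hcont n).exists_Icc_forall_le_abs isOpen_Ioo hs₀ hH
  have hshift : ∀ t ∈ Set.Icc (a + 1 / 2) (b + 1 / 2), t - 1 / 2 ∈ Set.Icc a b := fun t ht ↦
    ⟨by linarith [ht.1], by linarith [ht.2]⟩
  have hA' : 0 < |A₁ - A₀| := abs_pos.2 (sub_ne_zero.2 hA.symm)
  refine ⟨min (|A₁ - A₀| * ε) (1 / 2), ⟨by positivity, (min_le_right _ _).trans_lt (by norm_num)⟩,
    a + 1 / 2, b + 1 / 2, by linarith, fun t ht ↦ ?_, ?_⟩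
  · obtain ⟨h₁, h₂⟩ := habU (hshift t ht)
    constructor <;> linarith
  rintro k m x ⟨t, ht, rfl⟩
  have hts := hshift t ht
  obtain ⟨h₁, h₂⟩ := habU hts
  have hscale : (2 : ℝ) ^ k * ((2 : ℝ) ^ (-(k : ℤ)) * (m + t)) - m = t := by
    rw [zpow_neg, zpow_natCast, mul_inv_cancel_left₀ (by positivity)]; ring
  rw [integral_dilate_mul_comp_sub φ ψ (by positivity), hscale,
    integral_mul_comp_sub_eq_cauchyPrimitive hcont (by norm_num) hsupp'
      (fun i hi ↦ hmom i (by omega)) ⟨by linarith, by linarith⟩ A₀ A₁ c hleft hright, abs_mul]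
  calc min (|A₁ - A₀| * ε) (1 / 2) ≤ |A₁ - A₀| * ε := min_le_left _ _
    _ ≤ |A₁ - A₀| * |cauchyPrimitive φ (-1) n (t - 1 / 2)| := by gcongr; exact hbound _ hts

theorem stmt_5
    (n : ℕ) (φ : ℝ → ℝ)
    (hcont : Continuous φ) (hne : ∃ x : ℝ, φ x ≠ 0)
    (hsupp : ∀ x : ℝ, x ∉ Set.Ioo (-(2 : ℝ) ^ (-4 : ℤ)) ((2 : ℝ) ^ (-4 : ℤ)) → φ x = 0)
    (hmom : ∀ m : ℕ, m ≤ n + 1 → ∫ x : ℝ, x ^ m * φ x = 0)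
    (ψ : ℝ → ℝ) (hψ : MeasureTheory.LocallyIntegrable ψ)
    (A₀ A₁ : ℝ) (hA : A₀ ≠ A₁) (c : ℕ → ℝ)
    (hleft : ∀ x ∈ Set.Icc (0 : ℝ) (1 / 2),
      ψ x = A₀ * (x - 1 / 2) ^ n + ∑ j ∈ Finset.range n, c j * (x - 1 / 2) ^ j)
    (hright : ∀ x ∈ Set.Icc (1 / 2 : ℝ) 1,
      ψ x = A₁ * (x - 1 / 2) ^ n + ∑ j ∈ Finset.range n, c j * (x - 1 / 2) ^ j) :
    ∃ c₀ ∈ Set.Ioo (0 : ℝ) 1, ∃ a b : ℝ, a < b ∧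
      Set.Icc a b ⊆ Set.Icc (1 / 4 : ℝ) (3 / 4) ∧
      ∀ k : ℕ, ∀ m : ℤ, ∀ x : ℝ,
        (∃ t ∈ Set.Icc a b, x = (2 : ℝ) ^ (-(k : ℤ)) * ((m : ℝ) + t)) →
        c₀ ≤ |∫ y : ℝ, (2 : ℝ) ^ (k : ℕ) * φ ((2 : ℝ) ^ (k : ℕ) * y) *
                ψ ((2 : ℝ) ^ (k : ℕ) * (x - y) - (m : ℝ))| :=
  stmt_5_general n φ hcont hne hsupp hmom ψ A₀ A₁ hA c hleft hright
end

section
/- Let ψ : ℝ → ℝ be measurable with |ψ(x)| ≤ C e^{−γ|x|} for all x ∈ ℝ, where C > 0 and γ > 0. Let φ ∈ L¹(ℝ) vanish outside (−2^{−4}, 2^{−4}) with ‖φ‖_{L¹} ≤ 1, and set φ_k(y) = 2^k φ(2^k y). Let K_0 ≥ 1 be an integer, k ∈ ℕ, and μ, μ' ∈ ℤ with μ ≠ μ'. Then for every x ∈ ℝ with 2^k x − K_0 μ ∈ [1/4, 3/4], one has |(φ_k * ψ_{k,K_0μ'})(x)| ≤ C e^{7γ/8} e^{−γ K_0 |μ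 − μ'|}, where ψ_{k,m}(y) = ψ(2^k y − m). -/
open MeasureTheory Set Finset Real

theorem stmt_6
    (ψ : ℝ → ℝ) (hmeas : Measurable ψ)
    (C γ : ℝ) (hC : 0 < C) (hγ : 0 < γ)
    (hdecay : ∀ x : ℝ, |ψ x| ≤ C * Real.exp (-γ * |x|))
    (φ : ℝ → ℝ) (hφ : MeasureTheory.Integrable φ)
    (hsupp : ∀ x : ℝ, x ∉ Set.Ioo (-(2 : ℝ) ^ (-4 : ℤ)) ((2 : ℝ) ^ (-4 : ℤ)) → φ x = 0)
    (hL1 : ∫ y : ℝ, |φ y| ≤ 1)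
    (K₀ : ℤ) (hK₀ : 1 ≤ K₀) (k : ℕ) (μ μ' : ℤ) (hμ : μ ≠ μ') :
    ∀ x : ℝ, (2 : ℝ) ^ k * x - (K₀ : ℝ) * (μ : ℝ) ∈ Set.Icc (1 / 4 : ℝ) (3 / 4) →
      |∫ y : ℝ, (2 : ℝ) ^ k * φ ((2 : ℝ) ^ k * y) *
          ψ ((2 : ℝ) ^ k * (x - y) - (K₀ : ℝ) * (μ' : ℝ))| ≤
        C * Real.exp (7 * γ / 8) * Real.exp (-γ * (K₀ : ℝ) * |(μ : ℝ) - (μ' : ℝ)|) := by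
  intro x hx
  set B : ℝ := C * Real.exp (7 * γ / 8) * Real.exp (-γ * (K₀ : ℝ) * |(μ : ℝ) - (μ' : ℝ)|)
    with hB
  have hBpos : 0 < B := by positivity
  have h2k : (0 : ℝ) < (2 : ℝ) ^ k := by positivity
  -- pointwise bound
  have hpt : ∀ y : ℝ, |(2 : ℝ) ^ k * φ ((2 : ℝ) ^ k * y) *
      ψ ((2 : ℝ) ^ k * (x - y) - (K₀ : ℝ) * (μ' : ℝ))| ≤
      |(2 : ℝ) ^ k * φ ((2 : ℝ) ^ k * y)| * B := by
    intro y
    rw [abs_mul]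
    by_cases hy : φ ((2 : ℝ) ^ k * y) = 0
    · simp [hy]
    · have hmem : (2 : ℝ) ^ k * y ∈ Set.Ioo (-(2 : ℝ) ^ (-4 : ℤ)) ((2 : ℝ) ^ (-4 : ℤ)) := by
        by_contra hc
        exact hy (hsupp _ hc)
      have h116 : ((2 : ℝ) ^ (-4 : ℤ)) = 1 / 16 := by norm_num
      rw [h116] at hmem
      apply mul_le_mul_of_nonneg_left _ (abs_nonneg _)
      calc |ψ ((2 : ℝ) ^ k * (x - y) - (K₀ : ℝ) * (μ' : ℝ))|
          ≤ C * Real.exp (-γ * |(2 : ℝ) ^ k * (x - y) - (K₀ : ℝ) * (μ' : ℝ)|) := hdecay _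
        _ ≤ C * (Real.exp (7 * γ / 8) * Real.exp (-γ * (K₀ : ℝ) * |(μ : ℝ) - (μ' : ℝ)|)) := by
            rw [← Real.exp_add]
            gcongr
            have harg : (2 : ℝ) ^ k * (x - y) - (K₀ : ℝ) * (μ' : ℝ)
                = (K₀ : ℝ) * ((μ : ℝ) - (μ' : ℝ))
                  + (((2 : ℝ) ^ k * x - (K₀ : ℝ) * (μ : ℝ)) - (2 : ℝ) ^ k * y) := by ring
            have hK₀R : (1 : ℝ) ≤ (K₀ : ℝ) := by exact_mod_cast hK₀
            have hlb : (K₀ : ℝ) * |(μ : ℝ) - (μ' : ℝ)| - 7 / 8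
                ≤ |(2 : ℝ) ^ k * (x - y) - (K₀ : ℝ) * (μ' : ℝ)| := by
              rw [harg]
              have h1 : |(K₀ : ℝ) * ((μ : ℝ) - (μ' : ℝ))|
                  - |(((2 : ℝ) ^ k * x - (K₀ : ℝ) * (μ : ℝ)) - (2 : ℝ) ^ k * y)|
                  ≤ |(K₀ : ℝ) * ((μ : ℝ) - (μ' : ℝ))
                    + (((2 : ℝ) ^ k * x - (K₀ : ℝ) * (μ : ℝ)) - (2 : ℝ) ^ k * y)| := by
                have h0 := abs_sub_abs_le_abs_sub ((K₀ : ℝ) * ((μ : ℝ) - (μ' : ℝ)))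
                  (-((((2 : ℝ) ^ k * x - (K₀ : ℝ) * (μ : ℝ)) - (2 : ℝ) ^ k * y)))
                rw [abs_neg, sub_neg_eq_add] at h0
                exact h0
              have h2 : |(((2 : ℝ) ^ k * x - (K₀ : ℝ) * (μ : ℝ)) - (2 : ℝ) ^ k * y)| ≤ 7 / 8 := by
                have ha := hx.1
                have hb := hx.2
                have hc1 := hmem.1
                have hc2 := hmem.2
                rw [abs_le]
                constructor <;> nlinarith
              have h3 : |(K₀ : ℝ) * ((μ : ℝ) - (μ' : ℝ))| = (K₀ : ℝ) * |(μ : ℝ) - (μ' : ℝ)| := by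
                rw [abs_mul, abs_of_nonneg (by linarith : (0:ℝ) ≤ (K₀:ℝ))]
              linarith
            nlinarith
        _ = B := by rw [hB]; ring
  -- integrability of the dominating function
  have hφk : MeasureTheory.Integrable (fun y : ℝ => φ ((2 : ℝ) ^ k * y)) :=
    hφ.comp_mul_left' h2k.ne'
  have hg : MeasureTheory.Integrable
      (fun y : ℝ => |(2 : ℝ) ^ k * φ ((2 : ℝ) ^ k * y)| * B) :=
    ((hφk.const_mul ((2:ℝ)^k)).abs).mul_const B
  have key : |∫ y : ℝ, (2 : ℝ) ^ k * φ ((2 : ℝ) ^ k * y) *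
      ψ ((2 : ℝ) ^ k * (x - y) - (K₀ : ℝ) * (μ' : ℝ))|
      ≤ ∫ y : ℝ, |(2 : ℝ) ^ k * φ ((2 : ℝ) ^ k * y)| * B := by
    calc |∫ y : ℝ, (2 : ℝ) ^ k * φ ((2 : ℝ) ^ k * y) *
        ψ ((2 : ℝ) ^ k * (x - y) - (K₀ : ℝ) * (μ' : ℝ))|
        ≤ ∫ y : ℝ, |(2 : ℝ) ^ k * φ ((2 : ℝ) ^ k * y) *
          ψ ((2 : ℝ) ^ k * (x - y) - (K₀ : ℝ) * (μ' : ℝ))| := by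
          simpa only [Real.norm_eq_abs] using
            MeasureTheory.norm_integral_le_integral_norm (μ := MeasureTheory.volume)
              (fun y : ℝ => (2 : ℝ) ^ k * φ ((2 : ℝ) ^ k * y) *
                ψ ((2 : ℝ) ^ k * (x - y) - (K₀ : ℝ) * (μ' : ℝ)))
      _ ≤ ∫ y : ℝ, |(2 : ℝ) ^ k * φ ((2 : ℝ) ^ k * y)| * B := by
          apply MeasureTheory.integral_mono_of_nonneg
          · filter_upwards with y using abs_nonneg _
          · exact hg
          · filter_upwards with y using hpt y
  have hscale : ∫ y : ℝ, |(2 : ℝ) ^ k * φ ((2 : ℝ) ^ k * y)| ≤ 1 := by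
    have : (∫ y : ℝ, |φ ((2 : ℝ) ^ k * y)|) = |((2:ℝ)^k)⁻¹| • ∫ y : ℝ, |φ y| :=
      MeasureTheory.Measure.integral_comp_mul_left (fun y => |φ y|) ((2:ℝ)^k)
    have heq : (∫ y : ℝ, |(2 : ℝ) ^ k * φ ((2 : ℝ) ^ k * y)|)
        = (2:ℝ)^k * ∫ y : ℝ, |φ ((2 : ℝ) ^ k * y)| := by
      rw [← MeasureTheory.integral_const_mul]
      congr 1
      ext y
      rw [abs_mul, abs_of_pos h2k]
    rw [heq, this, smul_eq_mul, abs_of_pos (inv_pos.mpr h2k), ← mul_assoc,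
      mul_inv_cancel₀ h2k.ne', one_mul]
    exact hL1
  calc |∫ y : ℝ, (2 : ℝ) ^ k * φ ((2 : ℝ) ^ k * y) *
      ψ ((2 : ℝ) ^ k * (x - y) - (K₀ : ℝ) * (μ' : ℝ))|
      ≤ ∫ y : ℝ, |(2 : ℝ) ^ k * φ ((2 : ℝ) ^ k * y)| * B := key
    _ = (∫ y : ℝ, |(2 : ℝ) ^ k * φ ((2 : ℝ) ^ k * y)|) * B := by
        rw [MeasureTheory.integral_mul_const]
    _ ≤ 1 * B := by
        apply mul_le_mul_of_nonneg_right hscale hBpos.le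
    _ = B := one_mul B
end

section
/- Fix an integer n ≥ 1. Let ψ : ℝ → ℝ be (n−1)-times continuously differentiable such that for every θ ∈ ℤ the restriction of ψ to [θ/2, (θ+1)/2] coincides with a polynomial of degree at most n, with leading coefficient (the coefficient of x^n) denoted A_θ. Let η : ℝ → ℝ be integrable, vanishing outside (−2^{−5}, 2^{−5}), with ∫_ℝ y^M η(y) dy = 0 for every integer 0 ≤ M ≤ n+2, and such that y ↦ y^n η(y) is an odd function. Let k, N ∈ ℕ, let K_0 ≥ 1 be an integer, let μ, μ' ∈ ℤ, and set λ = 2 K_0 (μ' − μ). Then 2^k ∫_ℝ η(2^{k+N}(x − 2^{−k} K_0 μ' − 2^{−k−1})) ψ(2^k x − K_0 μ) dx = 2^{−(n+1)N} (A_{λ+1} − A_λ) ∫_0^{1/2} y^n η(y) dy. -/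
/-!
Substituting `y = 2^N (2^k x - K₀ μ) - 2^N a` with `a = (λ + 1) / 2` turns the left-hand side into
`2^(-N) ∫ η y * ψ (a + 2^(-N) y) dy`, and on the support of `η` the point `a + 2^(-N) y` stays in
the two half-integer intervals meeting at `a`. Since `ψ` is `C^(n-1)`, the polynomials of these
two intervals share their derivatives of order `< n` at `a`, so they differ by
`(A_(λ+1) - A_λ) (x - a)^n`. The vanishing moments of `η` annihilate the polynomial of the left
interval, and only the jump `(A_(λ+1) - A_λ) 2^(-nN) y^n` on `y > 0` contributes.
-/

open MeasureTheory Set Polynomial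

theorem Polynomial.iteratedDeriv_eval {𝕜 : Type*} [NontriviallyNormedField 𝕜] (p : 𝕜[X])
    (j : ℕ) :
    iteratedDeriv j (fun x => p.eval x) = fun x => (derivative^[j] p).eval x := by
  induction j with
  | zero => simp
  | succ j ih =>
    ext x
    rw [iteratedDeriv_succ, ih, Function.iterate_succ_apply']
    exact Polynomial.deriv _

theorem iteratedDeriv_eq_eval_of_eqOn_of_mem_closure {𝕜 : Type*} [NontriviallyNormedField 𝕜]
    {f : 𝕜 → 𝕜} {m j : ℕ} (hf : ContDiff 𝕜 m f) (hj : j ≤ m) {p : 𝕜[X]} {s : Set 𝕜}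
    (hs : IsOpen s) (hfp : EqOn f (fun x => p.eval x) s) {a : 𝕜} (ha : a ∈ closure s) :
    iteratedDeriv j f a = (derivative^[j] p).eval a := by
  have hfp' : EqOn (iteratedDeriv j f) (fun x => (derivative^[j] p).eval x) s := fun x hx => by
    rw [← Polynomial.iteratedDeriv_eval,
      (Filter.eventuallyEq_of_mem (hs.mem_nhds hx) hfp).iteratedDeriv_eq]
  exact hfp'.closure (hf.continuous_iteratedDeriv j (mod_cast hj)) (Polynomial.continuous _) ha

theorem Polynomial.taylor_eq_C_mul_X_pow_of_iterate_derivative_eval_eq_zero {K : Type*}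
    [Field K] [CharZero K] {D : K[X]} {n : ℕ} (hD : D.natDegree ≤ n) {a : K}
    (h : ∀ j < n, (derivative^[j] D).eval a = 0) :
    taylor a D = C (D.coeff n) * X ^ n := by
  ext i
  rw [coeff_C_mul_X_pow]
  rcases lt_trichotomy i n with hi | rfl | hi
  · rw [if_neg hi.ne, taylor_coeff]
    have hi := h i hi
    rw [← factorial_smul_hasseDeriv] at hi
    simpa [i.factorial_ne_zero] using hi
  · rw [if_pos rfl]
    rcases hD.lt_or_eq with hlt | rfl
    · rw [coeff_eq_zero_of_natDegree_lt hlt,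
        coeff_eq_zero_of_natDegree_lt ((natDegree_taylor D a).trans_lt hlt)]
    · exact coeff_taylor_natDegree a D
  · rw [if_neg hi.ne', coeff_eq_zero_of_natDegree_lt ((natDegree_taylor D a).trans_lt
      (hD.trans_lt hi))]

theorem Polynomial.eval_eq_coeff_mul_sub_pow_of_iterate_derivative_eval_eq_zero {K : Type*}
    [Field K] [CharZero K] {D : K[X]} {n : ℕ} (hD : D.natDegree ≤ n) {a : K}
    (h : ∀ j < n, (derivative^[j] D).eval a = 0) (x : K) :
    D.eval x = D.coeff n * (x - a) ^ n := by
  rw [← taylor_eval_sub a, taylor_eq_C_mul_X_pow_of_iterate_derivative_eval_eq_zero hD h]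
  simp

theorem eqOn_eval_add_indicator_of_contDiff {ψ : ℝ → ℝ} {n : ℕ}
    (hψ : ContDiff ℝ (n - 1 : ℕ) ψ) {p q : ℝ[X]} (hp : p.natDegree ≤ n) (hq : q.natDegree ≤ n)
    {b a c : ℝ} (hba : b < a) (hac : a < c) (hψp : EqOn ψ (fun x => p.eval x) (Icc b a))
    (hψq : EqOn ψ (fun x => q.eval x) (Icc a c)) :
    EqOn ψ (fun x => p.eval x +
      (Ioi a).indicator (fun x => (q.coeff n - p.coeff n) * (x - a) ^ n) x) (Icc b c) := by
  have hjump (x : ℝ) : q.eval x - p.eval x = (q.coeff n - p.coeff n) * (x - a) ^ n := by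
    rw [← eval_sub, ← coeff_sub]
    refine eval_eq_coeff_mul_sub_pow_of_iterate_derivative_eval_eq_zero
      ((natDegree_sub_le q p).trans (max_le hq hp)) (fun j hj => ?_) x
    have hj : j ≤ n - 1 := by omega
    rw [iterate_derivative_sub, eval_sub,
      ← iteratedDeriv_eq_eval_of_eqOn_of_mem_closure hψ hj isOpen_Ioo
        (hψq.mono Ioo_subset_Icc_self) (by rw [closure_Ioo hac.ne]; exact left_mem_Icc.mpr hac.le),
      ← iteratedDeriv_eq_eval_of_eqOn_of_mem_closure hψ hj isOpen_Ioo
        (hψp.mono Ioo_subset_Icc_self) (by rw [closure_Ioo hba.ne]; exact right_mem_Icc.mpr hba.le),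
      sub_self]
  intro x hx
  dsimp only
  by_cases hxa : x ∈ Ioi a
  · rw [indicator_of_mem hxa, ← hjump, hψq ⟨le_of_lt hxa, hx.2⟩]
    ring
  · rw [indicator_of_notMem hxa, add_zero, hψp ⟨hx.1, not_lt.mp hxa⟩]

theorem exists_natDegree_le_coeff_eq_eqOn {ψ : ℝ → ℝ} {n : ℕ} {s : Set ℝ} {c : ℕ → ℝ}
    (h : ∀ x ∈ s, ψ x = ∑ j ∈ Finset.range (n + 1), c j * x ^ j) :
    ∃ p : ℝ[X], p.natDegree ≤ n ∧ p.coeff n = c n ∧ EqOn ψ (fun x => p.eval x) s := by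
  refine ⟨∑ j ∈ Finset.range (n + 1), C (c j) * X ^ j, ?_, ?_, fun x hx => ?_⟩
  · refine natDegree_sum_le_of_forall_le _ _ fun j hj => ?_
    exact (natDegree_C_mul_X_pow_le _ _).trans (Finset.mem_range_succ_iff.mp hj)
  · simp [finsetSum_coeff]
  · simp [h x hx, eval_finsetSum]

theorem integrable_pow_mul_of_abs_le {η : ℝ → ℝ} (hη : Integrable η) {R : ℝ}
    (hR : ∀ y, η y ≠ 0 → |y| ≤ R) (M : ℕ) : Integrable fun y => y ^ M * η y := by
  refine (hη.norm.const_mul (R ^ M)).mono'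
    ((continuous_pow M).aestronglyMeasurable.mul hη.aestronglyMeasurable)
    (Filter.Eventually.of_forall fun y => ?_)
  by_cases hy : η y = 0
  · simp [hy]
  · rw [norm_mul, norm_pow, Real.norm_eq_abs]
    exact mul_le_mul_of_nonneg_right (pow_le_pow_left₀ (abs_nonneg y) (hR y hy) M) (norm_nonneg _)

theorem mul_eval_eq_sum_coeff_mul_pow_mul (η : ℝ → ℝ) {n : ℕ} {r : ℝ[X]}
    (hr : r.natDegree ≤ n) (y : ℝ) :
    η y * r.eval y = ∑ j ∈ Finset.range (n + 1), r.coeff j * (y ^ j * η y) := by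
  rw [eval_eq_sum_range' (Nat.lt_succ_of_le hr), Finset.mul_sum]
  exact Finset.sum_congr rfl fun j _ => by ring

section Moments

variable {η : ℝ → ℝ} {n : ℕ} {r : ℝ[X]}

theorem integrable_mul_eval_of_natDegree_le (hint : ∀ M ≤ n, Integrable fun y => y ^ M * η y)
    (hr : r.natDegree ≤ n) : Integrable fun y => η y * r.eval y := by
  simp_rw [mul_eval_eq_sum_coeff_mul_pow_mul η hr]
  exact integrable_finsetSum _ fun j hj =>
    (hint j (Finset.mem_range_succ_iff.mp hj)).const_mul _

theorem integral_mul_eval_eq_zero_of_moments (hint : ∀ M ≤ n, Integrable fun y => y ^ M * η y)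
    (hr : r.natDegree ≤ n) (hmom : ∀ M ≤ n, ∫ y, y ^ M * η y = 0) :
    ∫ y, η y * r.eval y = 0 := by
  simp_rw [mul_eval_eq_sum_coeff_mul_pow_mul η hr]
  rw [integral_finsetSum _ fun j hj => (hint j (Finset.mem_range_succ_iff.mp hj)).const_mul _]
  exact Finset.sum_eq_zero fun j hj => by
    rw [integral_const_mul, hmom j (Finset.mem_range_succ_iff.mp hj), mul_zero]

theorem integral_mul_eq_of_eq_eval_add_indicator
    (hint : ∀ M ≤ n, Integrable fun y => y ^ M * η y) (hr : r.natDegree ≤ n)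
    (hmom : ∀ M ≤ n, ∫ y, y ^ M * η y = 0) {φ : ℝ → ℝ} {d : ℝ}
    (hφ : ∀ y, η y ≠ 0 → φ y = r.eval y + (Ioi 0).indicator (fun y => d * y ^ n) y) :
    ∫ y, η y * φ y = d * ∫ y in Ioi 0, y ^ n * η y := by
  have hsplit : (fun y => η y * φ y) =
      fun y => η y * r.eval y + (Ioi 0).indicator (fun y => d * (y ^ n * η y)) y := by
    ext y
    by_cases hy : η y = 0
    · simp [hy, indicator_apply]
    · rw [hφ y hy, mul_add]
      by_cases hy0 : y ∈ Ioi 0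
      · rw [indicator_of_mem hy0, indicator_of_mem hy0]
        ring
      · rw [indicator_of_notMem hy0, indicator_of_notMem hy0, mul_zero]
  rw [hsplit, integral_add (integrable_mul_eval_of_natDegree_le hint hr)
      (((hint n le_rfl).const_mul d).indicator measurableSet_Ioi),
    integral_mul_eval_eq_zero_of_moments hint hr hmom, integral_indicator measurableSet_Ioi,
    integral_const_mul, zero_add]

end Moments

theorem setIntegral_Ioi_eq_intervalIntegral_of_eq_zero {f : ℝ → ℝ} {a b : ℝ} (hab : a ≤ b)
    (hf : ∀ x, b < x → f x = 0) : ∫ x in Ioi a, f x = ∫ x in a..b, f x := by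
  rw [intervalIntegral.integral_of_le hab]
  exact setIntegral_eq_of_subset_of_forall_sdiff_eq_zero measurableSet_Ioi Ioc_subset_Ioi_self
    fun x hx => hf x (not_le.mp fun hxb => hx.2 ⟨hx.1, hxb⟩)

theorem integral_comp_mul_sub_of_pos {E : Type*} [NormedAddCommGroup E] [NormedSpace ℝ E]
    (g : ℝ → E) {c : ℝ} (hc : 0 < c) (d : ℝ) : ∫ x, g (c * x - d) = c⁻¹ • ∫ y, g y := by
  rw [Measure.integral_comp_mul_left (fun u => g (u - d)) c, integral_sub_right_eq_self,
    abs_of_pos (inv_pos.mpr hc)]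

theorem integral_mul_comp_dyadic (η ψ : ℝ → ℝ) (k N : ℕ) (K μ μ' : ℝ) :
    (2 : ℝ) ^ k * ∫ x, η ((2 : ℝ) ^ (k + N) *
        (x - (2 : ℝ) ^ (-(k : ℤ)) * K * μ' - (2 : ℝ) ^ (-(k : ℤ) - 1))) *
          ψ ((2 : ℝ) ^ k * x - K * μ) =
      ((2 : ℝ) ^ N)⁻¹ * ∫ y, η y * ψ (((2 : ℝ) ^ N)⁻¹ * y + (2 * K * (μ' - μ) + 1) / 2) := by
  set a := (2 * K * (μ' - μ) + 1) / 2
  have h2k : (0 : ℝ) < 2 ^ k := by positivity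
  have h2N : (0 : ℝ) < 2 ^ N := by positivity
  have harg (x : ℝ) :
      (2 : ℝ) ^ (k + N) * (x - (2 : ℝ) ^ (-(k : ℤ)) * K * μ' - (2 : ℝ) ^ (-(k : ℤ) - 1)) =
        2 ^ N * (2 ^ k * x - K * μ) - 2 ^ N * a := by
    rw [zpow_sub₀ two_ne_zero, zpow_neg, zpow_natCast, pow_add]
    field_simp
    ring
  calc _ = (2 : ℝ) ^ k * ∫ x, (fun u => η (2 ^ N * u - 2 ^ N * a) * ψ u) (2 ^ k * x - K * μ) := by
        simp_rw [harg]
    _ = ∫ u, (fun y => η y * ψ ((2 ^ N)⁻¹ * y + a)) (2 ^ N * u - 2 ^ N * a) := by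
        rw [integral_comp_mul_sub_of_pos (fun u => η (2 ^ N * u - 2 ^ N * a) * ψ u) h2k,
          smul_eq_mul, mul_inv_cancel_left₀ h2k.ne']
        congr with u
        field_simp
        ring_nf
    _ = _ := by
        rw [integral_comp_mul_sub_of_pos (fun y => η y * ψ ((2 ^ N)⁻¹ * y + a)) h2N, smul_eq_mul]

theorem exists_eqOn_eval_add_indicator_of_halfInteger {n : ℕ} {ψ : ℝ → ℝ}
    (hψ : ContDiff ℝ (n - 1 : ℕ) ψ) {A : ℤ → ℝ}
    (hpoly : ∀ θ : ℤ, ∃ c : ℕ → ℝ, c n = A θ ∧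
      ∀ x ∈ Icc ((θ : ℝ) / 2) (((θ : ℝ) + 1) / 2), ψ x = ∑ j ∈ Finset.range (n + 1), c j * x ^ j)
    (θ : ℤ) :
    ∃ p : ℝ[X], p.natDegree ≤ n ∧ EqOn ψ (fun x => p.eval x + (Ioi (((θ : ℝ) + 1) / 2)).indicator
      (fun x => (A (θ + 1) - A θ) * (x - ((θ : ℝ) + 1) / 2) ^ n) x)
      (Icc ((θ : ℝ) / 2) (((θ : ℝ) + 2) / 2)) := by
  obtain ⟨c, hcA, hc⟩ := hpoly θ
  obtain ⟨c', hcA', hc'⟩ := hpoly (θ + 1)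
  obtain ⟨p, hp, hpc, hψp⟩ := exists_natDegree_le_coeff_eq_eqOn hc
  obtain ⟨q, hq, hqc, hψq⟩ := exists_natDegree_le_coeff_eq_eqOn hc'
  refine ⟨p, hp, ?_⟩
  rw [← hcA, ← hcA', ← hpc, ← hqc]
  refine eqOn_eval_add_indicator_of_contDiff hψ hp hq (by linarith) (by linarith) hψp ?_
  push_cast at hψq
  convert hψq using 3
  ring

theorem exists_eq_eval_add_indicator_comp_mul_add {ψ : ℝ → ℝ} {n : ℕ} {p : ℝ[X]}
    (hp : p.natDegree ≤ n) {s : Set ℝ} {a d : ℝ}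
    (hψ : EqOn ψ (fun x => p.eval x + (Ioi a).indicator (fun x => d * (x - a) ^ n) x) s)
    {β : ℝ} (hβ : 0 < β) :
    ∃ r : ℝ[X], r.natDegree ≤ n ∧ ∀ y, β * y + a ∈ s →
      ψ (β * y + a) = r.eval y + (Ioi 0).indicator (fun y => d * β ^ n * y ^ n) y := by
  refine ⟨p.comp (C β * X + C a),
    natDegree_comp_le.trans ((Nat.mul_le_mul hp natDegree_linear_le).trans_eq (mul_one n)),
    fun y hy => ?_⟩
  have hmem : β * y + a ∈ Ioi a ↔ y ∈ Ioi 0 := by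
    simp only [mem_Ioi, lt_add_iff_pos_left, mul_pos_iff_of_pos_left hβ]
  rw [hψ hy]
  dsimp only
  by_cases hy0 : y ∈ Ioi 0
  · rw [indicator_of_mem (hmem.mpr hy0), indicator_of_mem hy0]
    simp only [eval_comp, eval_add, eval_mul, eval_C, eval_X, add_sub_cancel_right]
    ring
  · rw [indicator_of_notMem (mt hmem.mp hy0), indicator_of_notMem hy0]
    simp

theorem stmt_7_general
    (n : ℕ) (ψ : ℝ → ℝ)
    (hsmooth : ContDiff ℝ (n - 1 : ℕ) ψ)
    (A : ℤ → ℝ)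
    (hpoly : ∀ θ : ℤ, ∃ c : ℕ → ℝ, c n = A θ ∧
      ∀ x ∈ Set.Icc ((θ : ℝ) / 2) (((θ : ℝ) + 1) / 2),
        ψ x = ∑ j ∈ Finset.range (n + 1), c j * x ^ j)
    (η : ℝ → ℝ) (hη : MeasureTheory.Integrable η)
    (hηsupp : ∀ y : ℝ, y ∉ Set.Ioo (-(2 : ℝ) ^ (-5 : ℤ)) ((2 : ℝ) ^ (-5 : ℤ)) → η y = 0)
    (hηmom : ∀ M : ℕ, M ≤ n + 2 → ∫ y : ℝ, y ^ M * η y = 0)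
    (k N : ℕ) (K₀ : ℤ) (μ μ' : ℤ) :
    (2 : ℝ) ^ k * ∫ x : ℝ,
        η ((2 : ℝ) ^ (k + N) * (x - (2 : ℝ) ^ (-(k : ℤ)) * (K₀ : ℝ) * (μ' : ℝ) -
            (2 : ℝ) ^ (-(k : ℤ) - 1))) *
          ψ ((2 : ℝ) ^ k * x - (K₀ : ℝ) * (μ : ℝ)) =
      (2 : ℝ) ^ (-(((n : ℤ) + 1) * (N : ℤ))) *
        (A (2 * K₀ * (μ' - μ) + 1) - A (2 * K₀ * (μ' - μ))) *
        ∫ y in (0 : ℝ)..(1 / 2), y ^ n * η y := by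
  set θ := 2 * K₀ * (μ' - μ)
  set β : ℝ := ((2 : ℝ) ^ N)⁻¹
  have hβ : 0 < β := by positivity
  have hβ1 : β ≤ 1 := inv_le_one_of_one_le₀ (one_le_pow₀ one_le_two)
  obtain ⟨p, hp, hglue⟩ := exists_eqOn_eval_add_indicator_of_halfInteger hsmooth hpoly θ
  obtain ⟨r, hr, hφ⟩ := exists_eq_eval_add_indicator_comp_mul_add hp hglue hβ
  have hsupp (y : ℝ) (hy : η y ≠ 0) : |y| ≤ 1 / 32 := by
    have hy := abs_lt.mpr (not_imp_comm.mp (hηsupp y) hy)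
    norm_num at hy
    exact hy.le
  have hmem (y : ℝ) (hy : η y ≠ 0) :
      β * y + ((θ : ℝ) + 1) / 2 ∈ Icc ((θ : ℝ) / 2) (((θ : ℝ) + 2) / 2) := by
    have hβy : |β * y| ≤ 1 / 2 := by
      rw [abs_mul, abs_of_pos hβ]
      linarith [mul_le_of_le_one_left (abs_nonneg y) hβ1, hsupp y hy]
    constructor <;> linarith [abs_le.mp hβy]
  have hθ : (θ : ℝ) = 2 * K₀ * (μ' - μ) := by push_cast [θ]; rfl
  have hscale : (2 : ℝ) ^ (-(((n : ℤ) + 1) * (N : ℤ))) = β * β ^ n := by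
    rw [← pow_succ', inv_pow, ← pow_mul, ← zpow_natCast, ← zpow_neg]
    push_cast
    ring_nf
  rw [integral_mul_comp_dyadic, ← hθ, integral_mul_eq_of_eq_eval_add_indicator
      (fun M _ => integrable_pow_mul_of_abs_le hη hsupp M) hr (fun M hM => hηmom M (by omega))
      (fun y hy => hφ y (hmem y hy)),
    setIntegral_Ioi_eq_intervalIntegral_of_eq_zero (by norm_num : (0 : ℝ) ≤ 1 / 2)
      fun y hy => by rw [not_imp_comm.mp (hsupp y) (by linarith [le_abs_self y]), mul_zero],
    hscale]
  ring

theorem stmt_7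
    (n : ℕ) (hn : 1 ≤ n) (ψ : ℝ → ℝ)
    (hsmooth : ContDiff ℝ (n - 1 : ℕ) ψ)
    (A : ℤ → ℝ)
    (hpoly : ∀ θ : ℤ, ∃ c : ℕ → ℝ, c n = A θ ∧
      ∀ x ∈ Set.Icc ((θ : ℝ) / 2) (((θ : ℝ) + 1) / 2),
        ψ x = ∑ j ∈ Finset.range (n + 1), c j * x ^ j)
    (η : ℝ → ℝ) (hη : MeasureTheory.Integrable η)
    (hηsupp : ∀ y : ℝ, y ∉ Set.Ioo (-(2 : ℝ) ^ (-5 : ℤ)) ((2 : ℝ) ^ (-5 : ℤ)) → η y = 0)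
    (hηmom : ∀ M : ℕ, M ≤ n + 2 → ∫ y : ℝ, y ^ M * η y = 0)
    (hηodd : ∀ y : ℝ, (-y) ^ n * η (-y) = -(y ^ n * η y))
    (k N : ℕ) (K₀ : ℤ) (hK₀ : 1 ≤ K₀) (μ μ' : ℤ) :
    (2 : ℝ) ^ k * ∫ x : ℝ,
        η ((2 : ℝ) ^ (k + N) * (x - (2 : ℝ) ^ (-(k : ℤ)) * (K₀ : ℝ) * (μ' : ℝ) -
            (2 : ℝ) ^ (-(k : ℤ) - 1))) *
          ψ ((2 : ℝ) ^ k * x - (K₀ : ℝ) * (μ : ℝ)) =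
      (2 : ℝ) ^ (-(((n : ℤ) + 1) * (N : ℤ))) *
        (A (2 * K₀ * (μ' - μ) + 1) - A (2 * K₀ * (μ' - μ))) *
        ∫ y in (0 : ℝ)..(1 / 2), y ^ n * η y :=
  stmt_7_general n ψ hsmooth A hpoly η hη hηsupp hηmom k N K₀ μ μ'
end

section
/- Fix an integer n ≥ 1. Let ψ : ℝ → ℝ be (n−1)-times continuously differentiable such that for every θ ∈ ℤ the restriction of ψ to [θ/2, (θ+1)/2] coincides with a polynomial of degree at most n, with leading coefficient A_θ, and assume |ψ^{(α)}(x)| ≤ C e^{−γ|x|} for all x ∈ ℝ and all 0 ≤ α ≤ n−1, where C, γ > 0. Assume Ã := A_1 − A_0 ≠ 0. Let η : ℝ → ℝ be integrable, vanishing outside (−2^{−5}, 2^{−5}), with ∫_ℝ y^M η(y) dy = 0 for 0 ≤ M ≤ n+2, and with y ↦ y^n η(y) odd. Then there exists an integer K_0* ≥ 1 (depending only on n, C, γ and Ã) such that for every integer K_0 ≥ K_0*, every s ∈ ℝ, every q ∈ (1,∞), every k, N ∈ ℕ, and every μ ∈ {0, 1, …, 2^k − 1}: (|Ã|/2) 2^{N(−s+1/q−n−1)}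 |∫_0^{1/2} y^n η(y) dy| ≤ |2^k ⟨Υ_k, ψ_{k,K_0μ}⟩| ≤ 2 |Ã| 2^{N(−s+1/q−n−1)} |∫_0^{1/2} y^n η(y) dy|, where Υ_k(y) = 2^{N(−s+1/q)} Σ_{μ'=0}^{2^k−1} η(2^{k+N}(y − 2^{−k} K_0 μ' − 2^{−k−1})), ψ_{k,m}(y) = ψ(2^k y − m), and ⟨f,g⟩ = ∫_ℝ f(y) g(y) dy. -/
/-!
Substituting `u = 2^(k+N) (y - 2^(-k) K₀ μ' - 2^(-k-1))` turns the `μ'`-th term of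
`2^k ⟨Υ_k, ψ_{k,K₀μ}⟩` into `2^(N(-s+1/q)) 2^(-N) ∫ η(u) ψ(2^(-N) u + m + 1/2) du` with
`m = K₀ (μ' - μ)`. Around `m + 1/2` the function `ψ` is a polynomial `Pl` on the left and `Pr` on
the right, and since `ψ` is `C^(n-1)` their difference is `(A_(2m+1) - A_(2m)) (x - m - 1/2)^n`.
The vanishing moments of `η` annihilate `Pl`, so the term is
`2^(N(-s+1/q-n-1)) (A_(2m+1) - A_(2m)) ∫_0^(1/2) y^n η(y) dy`.
The jumps `A_(2m+1) - A_(2m)` decay like `e^(-γ|m|)`, because `n! A_θ` is the slope of the affine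
function `ψ^(n-1)` on `[θ/2, (θ+1)/2]`. Hence for `K₀` large the terms with `μ' ≠ μ` add up to at
most `|Ã|/2`, while the term `μ' = μ` is `Ã`.
-/

open MeasureTheory Set Real

section

open Polynomial

namespace Polynomial

theorem exists_eval_eq_sum_range {R : Type*} [CommSemiring R] (c : ℕ → R) (n : ℕ) :
    ∃ P : R[X], P.natDegree ≤ n ∧ P.coeff n = c n ∧
      ∀ x, P.eval x = ∑ j ∈ Finset.range (n + 1), c j * x ^ j := by
  refine ⟨∑ j ∈ Finset.range (n + 1), C (c j) * X ^ j, ?_, ?_, fun x => by simp [eval_finsetSum]⟩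
  · refine natDegree_sum_le_of_forall_le _ _ fun j hj => (natDegree_C_mul_X_pow_le _ _).trans ?_
    exact Nat.lt_succ_iff.mp (Finset.mem_range.mp hj)
  · simp

theorem eq_C_mul_X_sub_C_pow_of_iterate_derivative_eval_eq_zero {R : Type*} [CommRing R]
    [IsDomain R] [CharZero R] {Q : R[X]} {n : ℕ} {a : R} (hdeg : Q.natDegree ≤ n)
    (hvan : ∀ j < n, (derivative^[j] Q).eval a = 0) :
    Q = C (Q.coeff n) * (X - C a) ^ n := by
  rcases eq_or_ne Q 0 with rfl | hQ
  · simp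
  have hmult : n ≤ Q.rootMultiplicity a := by
    cases n with
    | zero => exact Nat.zero_le _
    | succ n =>
      exact (lt_rootMultiplicity_iff_isRoot_iterate_derivative hQ).2 fun j hj => hvan j (by omega)
  obtain ⟨S, rfl⟩ := (pow_dvd_pow _ hmult).trans (pow_rootMultiplicity_dvd Q a)
  have hmonic : ((X - C a) ^ n).Monic := (monic_X_sub_C a).pow n
  have hdegn : ((X - C a) ^ n).natDegree = n := by
    rw [(monic_X_sub_C a).natDegree_pow, natDegree_X_sub_C, mul_one]
  have hS : S.natDegree = 0 := by
    rw [hmonic.natDegree_mul' (right_ne_zero_of_mul hQ), hdegn] at hdeg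
    omega
  rw [eq_C_of_natDegree_eq_zero hS, coeff_mul_C]
  have : ((X - C a) ^ n).coeff n = 1 := by
    simpa [hdegn] using hmonic.coeff_natDegree
  rw [this, one_mul, mul_comm]

theorem iterate_derivative_pred_eval_sub {R : Type*} [CommRing R] {P : R[X]} {n : ℕ}
    (hn : 1 ≤ n) (hdeg : P.natDegree ≤ n) (a b : R) :
    (derivative^[n - 1] P).eval b - (derivative^[n - 1] P).eval a
      = (n.factorial : R) * P.coeff n * (b - a) := by
  have hlin : (derivative^[n - 1] P).natDegree ≤ 1 :=
    (natDegree_iterate_derivative P (n - 1)).trans (by omega)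
  rw [eq_X_add_C_of_natDegree_le_one hlin, coeff_iterate_derivative]
  have hdesc : (1 + (n - 1)).descFactorial (n - 1) = n.factorial := by
    rw [show 1 + (n - 1) = n by omega, ← Nat.factorial_mul_descFactorial (Nat.sub_le n 1),
      show n - (n - 1) = 1 by omega, Nat.factorial_one, one_mul]
  simp only [eval_add, eval_mul, eval_C, eval_X, nsmul_eq_mul]
  rw [hdesc, show 1 + (n - 1) = n by omega]
  ring

theorem iteratedDeriv_eval_s9 {𝕜 : Type*} [NontriviallyNormedField 𝕜] (P : 𝕜[X]) (j : ℕ) :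
    iteratedDeriv j (fun x => P.eval x) = fun x => (derivative^[j] P).eval x := by
  induction j generalizing P with
  | zero => simp
  | succ j ih =>
    rw [iteratedDeriv_succ', show _root_.deriv (fun x => P.eval x) = fun x => P.derivative.eval x by
      ext; exact P.deriv, ih, Function.iterate_succ_apply]

end Polynomial

theorem iteratedDeriv_eqOn_of_eqOn_Icc {ψ : ℝ → ℝ} {m j : ℕ} (hψ : ContDiff ℝ m ψ) (hj : j ≤ m)
    {P : ℝ[X]} {a b : ℝ} (hab : a < b) (h : EqOn ψ (fun x => P.eval x) (Icc a b)) :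
    EqOn (iteratedDeriv j ψ) (fun x => (derivative^[j] P).eval x) (Icc a b) := by
  have hIoo := (h.mono Ioo_subset_Icc_self).iteratedDeriv_of_isOpen isOpen_Ioo j
  rw [iteratedDeriv_eval_s9] at hIoo
  simpa [closure_Ioo hab.ne] using
    hIoo.closure (hψ.continuous_iteratedDeriv j (mod_cast hj)) (derivative^[j] P).continuous

theorem MeasureTheory.Integrable.mul_continuous_of_support_subset {X : Type*}
    [TopologicalSpace X] [T2Space X] [MeasurableSpace X] [OpensMeasurableSpace X]
    {μ : Measure X} {η g : X → ℝ} {K : Set X} (hη : Integrable η μ) (hK : IsCompact K)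
    (hsupp : Function.support η ⊆ K) (hg : Continuous g) :
    Integrable (fun u => η u * g u) μ :=
  (integrableOn_iff_integrable_of_support_subset
    ((Function.support_mul_subset_left _ _).trans hsupp)).mp
    (hη.integrableOn.mul_continuousOn hg.continuousOn hK)

theorem integral_mul_eval_eq_zero_of_moments_s9 {μ : Measure ℝ} {η : ℝ → ℝ} {K : Set ℝ}
    (hη : Integrable η μ) (hK : IsCompact K) (hsupp : Function.support η ⊆ K) {n : ℕ}
    (hmom : ∀ j ≤ n, ∫ u, u ^ j * η u ∂μ = 0) {P : ℝ[X]} (hP : P.natDegree ≤ n) :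
    ∫ u, η u * P.eval u ∂μ = 0 := by
  have hint : ∀ j : ℕ, Integrable (fun u => P.coeff j * (u ^ j * η u)) μ := fun j => by
    simpa only [mul_comm] using
      (hη.mul_continuous_of_support_subset hK hsupp (continuous_pow j)).const_mul (P.coeff j)
  have hexp : ∀ u, η u * P.eval u = ∑ j ∈ Finset.range (n + 1), P.coeff j * (u ^ j * η u) :=
    fun u => by
      rw [eval_eq_sum_range' (Nat.lt_succ_of_le hP), Finset.mul_sum]
      exact Finset.sum_congr rfl fun j _ => by ring
  simp_rw [hexp]
  rw [integral_finsetSum _ fun j _ => hint j]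
  refine Finset.sum_eq_zero fun j hj => ?_
  rw [integral_const_mul, hmom j (Nat.lt_succ_iff.mp (Finset.mem_range.mp hj)), mul_zero]

section Jump

variable {n : ℕ} {ψ : ℝ → ℝ} {Pl Pr : ℝ[X]} {x₀ h : ℝ}

theorem sub_eq_C_mul_X_sub_C_pow_of_eqOn (hψ : ContDiff ℝ (n - 1 : ℕ) ψ)
    (hl : Pl.natDegree ≤ n) (hr : Pr.natDegree ≤ n) (hh : 0 < h)
    (hPl : EqOn ψ (fun x => Pl.eval x) (Icc (x₀ - h) x₀))
    (hPr : EqOn ψ (fun x => Pr.eval x) (Icc x₀ (x₀ + h))) :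
    Pr - Pl = C (Pr.coeff n - Pl.coeff n) * (X - C x₀) ^ n := by
  rw [← coeff_sub]
  refine eq_C_mul_X_sub_C_pow_of_iterate_derivative_eval_eq_zero
    ((natDegree_sub_le _ _).trans (max_le hr hl)) fun j hj => ?_
  rw [iterate_derivative_sub, eval_sub, sub_eq_zero]
  exact (iteratedDeriv_eqOn_of_eqOn_Icc hψ (by omega) (by linarith) hPr
    (left_mem_Icc.2 (by linarith))).symm.trans
    (iteratedDeriv_eqOn_of_eqOn_Icc hψ (by omega) (by linarith) hPl
      (right_mem_Icc.2 (by linarith)))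

theorem integral_mul_comp_eq_of_eqOn (hψ : ContDiff ℝ (n - 1 : ℕ) ψ)
    (hl : Pl.natDegree ≤ n) (hr : Pr.natDegree ≤ n) (hh : 0 < h)
    (hPl : EqOn ψ (fun x => Pl.eval x) (Icc (x₀ - h) x₀))
    (hPr : EqOn ψ (fun x => Pr.eval x) (Icc x₀ (x₀ + h)))
    {η : ℝ → ℝ} (hη : Integrable η) {c δ : ℝ} (hc : 0 < c) (hcδ : c * δ ≤ h)
    (hsupp : Function.support η ⊆ Icc (-δ) δ) (hmom : ∀ j ≤ n, ∫ u, u ^ j * η u = 0) :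
    ∫ u, η u * ψ (c * u + x₀) = (Pr.coeff n - Pl.coeff n) * c ^ n * ∫ u in Ioi 0, u ^ n * η u := by
  set a := Pr.coeff n - Pl.coeff n
  have hdiff := sub_eq_C_mul_X_sub_C_pow_of_eqOn hψ hl hr hh hPl hPr
  set Pc := Pl.comp (C c * X + C x₀)
  -- On the support of `η` we have `|c u| ≤ h`, and to the right of `x₀` we have
  -- `ψ = Pl + a (x - x₀) ^ n`.
  have hpt : ∀ u, η u * ψ (c * u + x₀)
      = η u * Pc.eval u + (Ioi 0).indicator (fun u => a * c ^ n * (u ^ n * η u)) u := by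
    intro u
    by_cases hu : η u = 0
    · simp [hu, indicator_apply]
    obtain ⟨hu₁, hu₂⟩ := hsupp hu
    rcases lt_or_ge 0 u with hu0 | hu0
    · have hx : c * u + x₀ ∈ Icc x₀ (x₀ + h) := ⟨by nlinarith, by nlinarith⟩
      rw [indicator_of_mem (mem_Ioi.2 hu0), hPr hx]
      dsimp only
      rw [← sub_add_cancel Pr Pl, eval_add, hdiff]
      simp only [Pc, eval_comp, eval_mul, eval_pow, eval_sub, eval_add, eval_C, eval_X]
      ring
    · have hx : c * u + x₀ ∈ Icc (x₀ - h) x₀ := ⟨by nlinarith, by nlinarith⟩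
      rw [indicator_of_notMem (notMem_Ioi.2 hu0), hPl hx]
      simp only [Pc, eval_comp, eval_mul, eval_add, eval_C, eval_X, add_zero]
  have hint₁ : Integrable (fun u => η u * Pc.eval u) :=
    hη.mul_continuous_of_support_subset isCompact_Icc hsupp Pc.continuous
  have hint₂ : Integrable (fun u => a * c ^ n * (u ^ n * η u)) := by
    simpa only [mul_comm (_ ^ n)] using
      (hη.mul_continuous_of_support_subset isCompact_Icc hsupp (continuous_pow n)).const_mul _
  have hdeg : Pc.natDegree ≤ n := by
    refine natDegree_comp_le.trans ((Nat.mul_le_mul hl (natDegree_linear_le (a := c))).trans ?_)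
    rw [mul_one]
  rw [integral_congr_ae (ae_of_all _ hpt), integral_add hint₁ (hint₂.indicator measurableSet_Ioi),
    integral_indicator measurableSet_Ioi, integral_mul_eval_eq_zero_of_moments_s9 hη isCompact_Icc
    hsupp hmom hdeg, integral_const_mul, zero_add]

end Jump

def IsPiecewisePolynomial (n : ℕ) (A : ℤ → ℝ) (ψ : ℝ → ℝ) : Prop :=
  ∀ θ : ℤ, ∃ P : ℝ[X], P.natDegree ≤ n ∧ P.coeff n = A θ ∧
    EqOn ψ (fun x => P.eval x) (Icc ((θ : ℝ) / 2) (((θ : ℝ) + 1) / 2))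

/-- Up to the factor `n !`, the jump of the `n`-th derivative of `ψ` at `m + 1/2`. -/
def jump (A : ℤ → ℝ) (m : ℤ) : ℝ := A (2 * m + 1) - A (2 * m)

theorem jump_zero (A : ℤ → ℝ) : jump A 0 = A 1 - A 0 := by
  simp [jump]

theorem exp_neg_mul_abs_le {γ x y : ℝ} (hγ : 0 ≤ γ) (hxy : |x - y| ≤ 1) :
    exp (-γ * |x|) ≤ exp γ * exp (-γ * |y|) := by
  rw [← exp_add, exp_le_exp]
  have := abs_sub_abs_le_abs_sub y x
  rw [abs_sub_comm] at this
  nlinarith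

theorem abs_coeff_mul_sub_le_of_eqOn {n : ℕ} {ψ : ℝ → ℝ} (hn : 1 ≤ n)
    (hψ : ContDiff ℝ (n - 1 : ℕ) ψ) {C γ : ℝ} (hC : 0 ≤ C) (hγ : 0 ≤ γ)
    (hdecay : ∀ x, |iteratedDeriv (n - 1) ψ x| ≤ C * exp (-γ * |x|))
    {P : ℝ[X]} (hP : P.natDegree ≤ n) {a b y : ℝ} (hab : a < b)
    (h : EqOn ψ (fun x => P.eval x) (Icc a b)) (ha : |a - y| ≤ 1) (hb : |b - y| ≤ 1) :
    |P.coeff n| * (b - a) ≤ 2 * C * exp γ * exp (-γ * |y|) := by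
  have hslope := iterate_derivative_pred_eval_sub hn hP a b
  have hright := iteratedDeriv_eqOn_of_eqOn_Icc hψ le_rfl hab h (right_mem_Icc.2 hab.le)
  have hleft := iteratedDeriv_eqOn_of_eqOn_Icc hψ le_rfl hab h (left_mem_Icc.2 hab.le)
  beta_reduce at hright hleft
  rw [← hright, ← hleft] at hslope
  have hbound : ∀ x, |x - y| ≤ 1 → |iteratedDeriv (n - 1) ψ x| ≤ C * exp γ * exp (-γ * |y|) :=
    fun x hx => (hdecay x).trans (by
      rw [mul_assoc]; exact mul_le_mul_of_nonneg_left (exp_neg_mul_abs_le hγ hx) hC)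
  have hfac : (1 : ℝ) ≤ n.factorial := mod_cast Nat.one_le_iff_ne_zero.2 n.factorial_ne_zero
  have := abs_sub (iteratedDeriv (n - 1) ψ b) (iteratedDeriv (n - 1) ψ a)
  rw [hslope, abs_mul, abs_mul, abs_of_pos (by positivity : (0 : ℝ) < n.factorial),
    abs_of_pos (sub_pos.2 hab)] at this
  nlinarith [hbound _ ha, hbound _ hb, mul_nonneg (abs_nonneg (P.coeff n)) (sub_pos.2 hab).le]

namespace IsPiecewisePolynomial

variable {n : ℕ} {A : ℤ → ℝ} {ψ : ℝ → ℝ}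

theorem exists_eqOn_left_right (hpw : IsPiecewisePolynomial n A ψ) (m : ℤ) :
    ∃ Pl Pr : ℝ[X], Pl.natDegree ≤ n ∧ Pr.natDegree ≤ n ∧
      Pl.coeff n = A (2 * m) ∧ Pr.coeff n = A (2 * m + 1) ∧
      EqOn ψ (fun x => Pl.eval x) (Icc ((m : ℝ) + 1 / 2 - 1 / 2) (m + 1 / 2)) ∧
      EqOn ψ (fun x => Pr.eval x) (Icc ((m : ℝ) + 1 / 2) (m + 1 / 2 + 1 / 2)) := by
  obtain ⟨Pl, hl, hAl, hPl⟩ := hpw (2 * m)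
  obtain ⟨Pr, hr, hAr, hPr⟩ := hpw (2 * m + 1)
  refine ⟨Pl, Pr, hl, hr, hAl, hAr, ?_, ?_⟩
  · convert hPl using 2 <;> push_cast <;> ring
  · convert hPr using 2 <;> push_cast <;> ring

theorem abs_jump_le (hpw : IsPiecewisePolynomial n A ψ) (hn : 1 ≤ n)
    (hψ : ContDiff ℝ (n - 1 : ℕ) ψ) {C γ : ℝ} (hC : 0 ≤ C) (hγ : 0 ≤ γ)
    (hdecay : ∀ x, |iteratedDeriv (n - 1) ψ x| ≤ C * exp (-γ * |x|)) (m : ℤ) :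
    |jump A m| ≤ 8 * C * exp γ * exp (-γ * |(m : ℝ)|) := by
  obtain ⟨Pl, Pr, hl, hr, hAl, hAr, hPl, hPr⟩ := hpw.exists_eqOn_left_right m
  have hbl := abs_coeff_mul_sub_le_of_eqOn hn hψ hC hγ hdecay hl (by linarith) hPl (y := m)
    (by ring_nf; norm_num) (by ring_nf; norm_num)
  have hbr := abs_coeff_mul_sub_le_of_eqOn hn hψ hC hγ hdecay hr (by linarith) hPr (y := m)
    (by ring_nf; norm_num) (by ring_nf; norm_num)
  rw [hAl, sub_sub_cancel] at hbl
  rw [hAr, add_sub_cancel_left] at hbr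
  rw [jump]
  linarith [abs_sub (A (2 * m + 1)) (A (2 * m))]

theorem integral_mul_comp_add_half (hpw : IsPiecewisePolynomial n A ψ)
    (hψ : ContDiff ℝ (n - 1 : ℕ) ψ) {η : ℝ → ℝ} (hη : Integrable η) {c δ : ℝ} (hc : 0 < c)
    (hcδ : c * δ ≤ 1 / 2) (hsupp : Function.support η ⊆ Icc (-δ) δ)
    (hmom : ∀ j ≤ n, ∫ u, u ^ j * η u = 0) (m : ℤ) :
    ∫ u, η u * ψ (c * u + (m + 1 / 2)) = jump A m * c ^ n * ∫ u in Ioi 0, u ^ n * η u := by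
  obtain ⟨Pl, Pr, hl, hr, hAl, hAr, hPl, hPr⟩ := hpw.exists_eqOn_left_right m
  rw [jump, ← hAl, ← hAr]
  exact integral_mul_comp_eq_of_eqOn hψ hl hr (by norm_num) hPl hPr hη hc hcδ hsupp hmom

end IsPiecewisePolynomial

theorem sum_range_pow_succ_le {r : ℝ} (hr0 : 0 ≤ r) (hr1 : r < 1) (L : ℕ) :
    ∑ j ∈ Finset.range L, r ^ (j + 1) ≤ r / (1 - r) := by
  have := geom_sum_Ico_le_of_lt_one (m := 1) (n := L + 1) hr0 hr1
  rw [Finset.sum_Ico_eq_sum_range, Nat.add_sub_cancel, pow_one] at this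
  simpa only [add_comm 1] using this

theorem sum_erase_pow_natAbs_sub_le {r : ℝ} (hr0 : 0 ≤ r) (hr1 : r < 1) {M μ : ℕ} (hμ : μ < M) :
    ∑ i ∈ (Finset.range M).erase μ, r ^ ((i : ℤ) - μ).natAbs ≤ 2 * (r / (1 - r)) := by
  have hsplit : (Finset.range M).erase μ = Finset.range μ ∪ Finset.Ico (μ + 1) M := by
    ext i
    simp only [Finset.mem_erase, Finset.mem_range, Finset.mem_union, Finset.mem_Ico]
    omega
  have hdisj : Disjoint (Finset.range μ) (Finset.Ico (μ + 1) M) := by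
    simp only [Finset.disjoint_left, Finset.mem_range, Finset.mem_Ico]
    omega
  rw [hsplit, Finset.sum_union hdisj, two_mul]
  gcongr
  · rw [← Finset.sum_range_reflect]
    refine le_of_eq_of_le (Finset.sum_congr rfl fun j hj => ?_) (sum_range_pow_succ_le hr0 hr1 μ)
    rw [Finset.mem_range] at hj
    congr 1
    omega
  · rw [Finset.sum_Ico_eq_sum_range]
    refine le_of_eq_of_le (Finset.sum_congr rfl fun j _ => ?_) (sum_range_pow_succ_le hr0 hr1 _)
    congr 1
    omega

theorem abs_sum_range_comp_sub_le {f : ℤ → ℝ} {B γ : ℝ} (hB : 0 ≤ B)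
    (hf : ∀ m : ℤ, |f m| ≤ B * exp (-γ * |(m : ℝ)|)) {K : ℤ} (hK : 0 ≤ K)
    (hr : exp (-(γ * K)) ≤ 1 / 2) {M μ : ℕ} (hμ : μ < M) :
    |∑ i ∈ Finset.range M, f (K * (i - μ)) - f 0| ≤ 4 * B * exp (-(γ * K)) := by
  set r := exp (-(γ * K))
  have hr0 : 0 ≤ r := (exp_pos _).le
  have hterm : ∀ i : ℕ, |f (K * (i - μ))| ≤ B * r ^ ((i : ℤ) - μ).natAbs := fun i => by
    refine (hf _).trans_eq ?_
    have habs : |((K * (i - μ) : ℤ) : ℝ)| = ((K * ((i : ℤ) - μ).natAbs : ℤ) : ℝ) := by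
      rw [← Int.cast_abs, abs_mul, abs_of_nonneg hK, Int.abs_eq_natAbs]
    rw [habs, ← exp_nat_mul, Int.cast_mul, Int.cast_natCast]
    ring_nf
  rw [← Finset.add_sum_erase _ _ (Finset.mem_range.2 hμ), sub_self, mul_zero, add_sub_cancel_left]
  calc |∑ i ∈ (Finset.range M).erase μ, f (K * (i - μ))|
      ≤ ∑ i ∈ (Finset.range M).erase μ, B * r ^ ((i : ℤ) - μ).natAbs :=
        (Finset.abs_sum_le_sum_abs _ _).trans (Finset.sum_le_sum fun i _ => hterm i)
    _ ≤ B * (2 * (r / (1 - r))) := by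
        rw [← Finset.mul_sum]
        exact mul_le_mul_of_nonneg_left (sum_erase_pow_natAbs_sub_le hr0 (by linarith) hμ) hB
    _ ≤ 4 * B * r := by
        have : r / (1 - r) ≤ 2 * r := by
          rw [div_le_iff₀ (by linarith)]
          nlinarith
        nlinarith

theorem exists_forall_exp_neg_mul_le {γ δ : ℝ} (hγ : 0 < γ) (hδ : 0 < δ) :
    ∃ K₀ : ℤ, 1 ≤ K₀ ∧ ∀ K : ℤ, K₀ ≤ K → exp (-(γ * K)) ≤ δ := by
  refine ⟨max 1 ⌈-log δ / γ⌉, le_max_left _ _, fun K hK => ?_⟩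
  have hK' : -log δ / γ ≤ K :=
    (Int.le_ceil _).trans (by exact_mod_cast (le_max_right _ _).trans hK)
  rw [div_le_iff₀ hγ] at hK'
  calc exp (-(γ * K)) ≤ exp (log δ) := exp_le_exp.2 (by linarith)
    _ = δ := exp_log hδ

theorem exists_forall_abs_sum_range_comp_sub_le {f : ℤ → ℝ} {B γ : ℝ} (hB : 0 < B) (hγ : 0 < γ)
    (hf : ∀ m : ℤ, |f m| ≤ B * exp (-γ * |(m : ℝ)|)) {ε : ℝ} (hε : 0 < ε) :
    ∃ K₀ : ℤ, 1 ≤ K₀ ∧ ∀ K : ℤ, K₀ ≤ K → ∀ M μ : ℕ, μ < M →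
      |∑ i ∈ Finset.range M, f (K * (i - μ)) - f 0| ≤ ε := by
  obtain ⟨K₀, hK₀, hK⟩ := exists_forall_exp_neg_mul_le hγ
    (lt_min one_half_pos (by positivity : 0 < ε / (4 * B)))
  refine ⟨K₀, hK₀, fun K hK₀K M μ hμ => ?_⟩
  have hr := hK K hK₀K
  calc _ ≤ 4 * B * exp (-(γ * K)) :=
        abs_sum_range_comp_sub_le hB.le hf (by omega) (hr.trans (min_le_left _ _)) hμ
    _ ≤ 4 * B * (ε / (4 * B)) := by gcongr; exact hr.trans (min_le_right _ _)
    _ = ε := by field_simp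

theorem half_abs_le_abs_and_abs_le_two_mul {a b : ℝ} (h : |b - a| ≤ |a| / 2) :
    |a| / 2 ≤ |b| ∧ |b| ≤ 2 * |a| := by
  have h₁ := abs_sub_abs_le_abs_sub b a
  have h₂ := abs_sub_abs_le_abs_sub a b
  rw [abs_sub_comm] at h₂
  constructor <;> linarith

theorem MeasureTheory.Integrable.comp_mul_add {E : Type*} [NormedAddCommGroup E] {g : ℝ → E}
    (hg : Integrable g) {a : ℝ} (ha : a ≠ 0) (b : ℝ) : Integrable (fun x => g (a * x + b)) :=
  (hg.comp_add_right b).comp_mul_left' ha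

theorem integral_comp_mul_add {E : Type*} [NormedAddCommGroup E] [NormedSpace ℝ E] (g : ℝ → E)
    (a b : ℝ) : ∫ x, g (a * x + b) = |a⁻¹| • ∫ x, g x := by
  rw [Measure.integral_comp_mul_left (fun x => g (x + b)) a, integral_add_right_eq_self]

theorem setIntegral_Ioi_eq_intervalIntegral {E : Type*} [NormedAddCommGroup E] [NormedSpace ℝ E]
    {f : ℝ → E} {a b : ℝ} (hab : a ≤ b) (hf : ∀ x, b < x → f x = 0) :
    ∫ x in Ioi a, f x = ∫ x in a..b, f x := by
  rw [intervalIntegral.integral_of_le hab,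
    setIntegral_eq_of_subset_of_forall_sdiff_eq_zero measurableSet_Ioi Ioc_subset_Ioi_self]
  rintro x ⟨hx, hx'⟩
  exact hf x (lt_of_not_ge fun h => hx' ⟨hx, h⟩)

theorem dyadic_term_eq_comp_affine (f φ : ℝ → ℝ) (k N : ℕ) (K t b : ℝ) :
    (fun y => f ((2 : ℝ) ^ (k + N) * (y - (2 : ℝ) ^ (-(k : ℤ)) * K * t - (2 : ℝ) ^ (-(k : ℤ) - 1)))
        * φ ((2 : ℝ) ^ k * y - b))
      = fun y => (fun u => f u * φ (((2 : ℝ) ^ N)⁻¹ * u + (K * t - b + 1 / 2)))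
          ((2 : ℝ) ^ (k + N) * y + -((2 : ℝ) ^ N * (K * t + 1 / 2))) := by
  have hk : (2 : ℝ) ^ (-(k : ℤ)) = ((2 : ℝ) ^ k)⁻¹ := by rw [zpow_neg, zpow_natCast]
  have hk' : (2 : ℝ) ^ (-(k : ℤ) - 1) = ((2 : ℝ) ^ k)⁻¹ * 2⁻¹ := by
    rw [zpow_sub₀ two_ne_zero, hk, zpow_one, div_eq_mul_inv]
  ext y
  congr 2
  · rw [hk, hk', pow_add]
    field_simp
    ring
  · rw [pow_add]
    field_simp
    ring

theorem integral_dyadic_term (f φ : ℝ → ℝ) (k N : ℕ) (K t b : ℝ) :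
    ∫ y, f ((2 : ℝ) ^ (k + N) * (y - (2 : ℝ) ^ (-(k : ℤ)) * K * t - (2 : ℝ) ^ (-(k : ℤ) - 1)))
        * φ ((2 : ℝ) ^ k * y - b)
      = ((2 : ℝ) ^ (k + N))⁻¹ * ∫ u, f u * φ (((2 : ℝ) ^ N)⁻¹ * u + (K * t - b + 1 / 2)) := by
  rw [dyadic_term_eq_comp_affine,
    integral_comp_mul_add (fun u => f u * φ (((2 : ℝ) ^ N)⁻¹ * u + (K * t - b + 1 / 2))),
    abs_of_pos (by positivity), smul_eq_mul]

theorem MeasureTheory.Integrable.dyadic_term {f φ : ℝ → ℝ} {N : ℕ} {K t b : ℝ}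
    (h : Integrable fun u => f u * φ (((2 : ℝ) ^ N)⁻¹ * u + (K * t - b + 1 / 2))) (k : ℕ) :
    Integrable fun y =>
      f ((2 : ℝ) ^ (k + N) * (y - (2 : ℝ) ^ (-(k : ℤ)) * K * t - (2 : ℝ) ^ (-(k : ℤ) - 1)))
        * φ ((2 : ℝ) ^ k * y - b) := by
  rw [dyadic_term_eq_comp_affine]
  exact h.comp_mul_add (by positivity) _

namespace IsPiecewisePolynomial

variable {n : ℕ} {A : ℤ → ℝ} {ψ : ℝ → ℝ}

theorem integrable_dyadic_term_and_integral_eq (hpw : IsPiecewisePolynomial n A ψ)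
    (hψ : ContDiff ℝ (n - 1 : ℕ) ψ) {η : ℝ → ℝ} (hη : Integrable η) {δ : ℝ} (hδ : δ ≤ 1 / 2)
    (hsupp : Function.support η ⊆ Icc (-δ) δ) (hmom : ∀ j ≤ n, ∫ u, u ^ j * η u = 0)
    (K₀ : ℤ) (k N μ μ' : ℕ) :
    Integrable (fun y => η ((2 : ℝ) ^ (k + N) * (y - (2 : ℝ) ^ (-(k : ℤ)) * K₀ * μ' -
        (2 : ℝ) ^ (-(k : ℤ) - 1))) * ψ ((2 : ℝ) ^ k * y - K₀ * μ)) ∧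
      ∫ y, η ((2 : ℝ) ^ (k + N) * (y - (2 : ℝ) ^ (-(k : ℤ)) * K₀ * μ' -
        (2 : ℝ) ^ (-(k : ℤ) - 1))) * ψ ((2 : ℝ) ^ k * y - K₀ * μ)
        = ((2 : ℝ) ^ (k + N))⁻¹ *
          (jump A (K₀ * (μ' - μ)) * ((2 : ℝ) ^ N)⁻¹ ^ n * ∫ u in Ioi 0, u ^ n * η u) := by
  have hc : (0 : ℝ) < ((2 : ℝ) ^ N)⁻¹ := by positivity
  have hcδ : ((2 : ℝ) ^ N)⁻¹ * δ ≤ 1 / 2 := by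
    have : ((2 : ℝ) ^ N)⁻¹ ≤ 1 := inv_le_one_of_one_le₀ (one_le_pow₀ one_le_two)
    rcases le_or_gt 0 δ with h | h <;> nlinarith
  have hm : (K₀ : ℝ) * μ' - K₀ * μ + 1 / 2 = ((K₀ * (μ' - μ) : ℤ) : ℝ) + 1 / 2 := by
    push_cast; ring
  have hG : Integrable fun u =>
      η u * ψ (((2 : ℝ) ^ N)⁻¹ * u + (((K₀ * (μ' - μ) : ℤ) : ℝ) + 1 / 2)) := by
    have := hψ.continuous
    exact hη.mul_continuous_of_support_subset isCompact_Icc hsupp (by fun_prop)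
  rw [← hm] at hG
  refine ⟨hG.dyadic_term k, ?_⟩
  rw [integral_dyadic_term, hm, hpw.integral_mul_comp_add_half hψ hη hc hcδ hsupp hmom]

theorem two_pow_mul_integral_eq (hpw : IsPiecewisePolynomial n A ψ)
    (hψ : ContDiff ℝ (n - 1 : ℕ) ψ) {η : ℝ → ℝ} (hη : Integrable η) {δ : ℝ} (hδ : δ ≤ 1 / 2)
    (hsupp : Function.support η ⊆ Icc (-δ) δ) (hmom : ∀ j ≤ n, ∫ u, u ^ j * η u = 0)
    (ρ : ℝ) (K₀ : ℤ) (k N μ : ℕ) :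
    (2 : ℝ) ^ k * ∫ y : ℝ,
        ((2 : ℝ) ^ ((N : ℝ) * ρ) *
          ∑ μ' ∈ Finset.range (2 ^ k),
            η ((2 : ℝ) ^ (k + N) * (y - (2 : ℝ) ^ (-(k : ℤ)) * (K₀ : ℝ) * (μ' : ℝ) -
              (2 : ℝ) ^ (-(k : ℤ) - 1)))) *
          ψ ((2 : ℝ) ^ k * y - (K₀ : ℝ) * (μ : ℝ))
      = (2 : ℝ) ^ ((N : ℝ) * (ρ - n - 1)) *
          ((∑ μ' ∈ Finset.range (2 ^ k), jump A (K₀ * (μ' - μ))) *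
            ∫ y in (0 : ℝ)..(1 / 2), y ^ n * η y) := by
  have hterm := hpw.integrable_dyadic_term_and_integral_eq hψ hη hδ hsupp hmom K₀ k N μ
  have hJ : ∫ u in Ioi 0, u ^ n * η u = ∫ y in (0 : ℝ)..(1 / 2), y ^ n * η y :=
    setIntegral_Ioi_eq_intervalIntegral (by norm_num) fun x hx => by
      rw [Function.notMem_support.1 fun h => absurd ((hsupp h).2.trans hδ) (not_le.2 hx),
        mul_zero]
  have hpow : (2 : ℝ) ^ ((N : ℝ) * (ρ - n - 1))
      = (2 : ℝ) ^ ((N : ℝ) * ρ) * ((2 : ℝ) ^ N)⁻¹ ^ (n + 1) := by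
    rw [show (N : ℝ) * (ρ - n - 1) = N * ρ - ((N * (n + 1) : ℕ) : ℝ) by push_cast; ring,
      rpow_sub two_pos, rpow_natCast, pow_mul, inv_pow, div_eq_mul_inv]
  simp_rw [mul_assoc _ (Finset.sum _ _), Finset.sum_mul]
  rw [integral_const_mul, integral_finsetSum _ fun μ' _ => (hterm μ').1,
    Finset.sum_congr rfl fun μ' _ => (hterm μ').2, hJ, hpow, Finset.mul_sum, Finset.mul_sum,
    Finset.mul_sum]
  refine Finset.sum_congr rfl fun μ' _ => ?_
  simp only [pow_add, pow_succ]
  field_simp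

end IsPiecewisePolynomial

end

theorem stmt_9_general
    (n : ℕ) (hn : 1 ≤ n) (ψ : ℝ → ℝ)
    (hsmooth : ContDiff ℝ (n - 1 : ℕ) ψ)
    (A : ℤ → ℝ)
    (hpoly : ∀ θ : ℤ, ∃ c : ℕ → ℝ, c n = A θ ∧
      ∀ x ∈ Set.Icc ((θ : ℝ) / 2) (((θ : ℝ) + 1) / 2),
        ψ x = ∑ j ∈ Finset.range (n + 1), c j * x ^ j)
    (C γ : ℝ) (hC : 0 < C) (hγ : 0 < γ)
    (hdecay : ∀ α : ℕ, α ≤ n - 1 → ∀ x : ℝ,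
      |iteratedDeriv α ψ x| ≤ C * Real.exp (-γ * |x|))
    (hAtilde : A 1 - A 0 ≠ 0)
    (η : ℝ → ℝ) (hη : MeasureTheory.Integrable η)
    (hηsupp : ∀ y : ℝ, y ∉ Set.Ioo (-(2 : ℝ) ^ (-5 : ℤ)) ((2 : ℝ) ^ (-5 : ℤ)) → η y = 0)
    (hηmom : ∀ M : ℕ, M ≤ n + 2 → ∫ y : ℝ, y ^ M * η y = 0) :
    ∃ K₀star : ℤ, 1 ≤ K₀star ∧
      ∀ K₀ : ℤ, K₀star ≤ K₀ →
      ∀ s q : ℝ, 1 < q →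
      ∀ k N : ℕ, ∀ μ : ℕ, μ < 2 ^ k →
        |A 1 - A 0| / 2 * (2 : ℝ) ^ ((N : ℝ) * (-s + 1 / q - n - 1)) *
            |∫ y in (0 : ℝ)..(1 / 2), y ^ n * η y| ≤
          |(2 : ℝ) ^ k * ∫ y : ℝ,
              ((2 : ℝ) ^ ((N : ℝ) * (-s + 1 / q)) *
                ∑ μ' ∈ Finset.range (2 ^ k),
                  η ((2 : ℝ) ^ (k + N) * (y - (2 : ℝ) ^ (-(k : ℤ)) * (K₀ : ℝ) * (μ' : ℝ) -
                      (2 : ℝ) ^ (-(k : ℤ) - 1)))) *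
                ψ ((2 : ℝ) ^ k * y - (K₀ : ℝ) * (μ : ℝ))| ∧
          |(2 : ℝ) ^ k * ∫ y : ℝ,
              ((2 : ℝ) ^ ((N : ℝ) * (-s + 1 / q)) *
                ∑ μ' ∈ Finset.range (2 ^ k),
                  η ((2 : ℝ) ^ (k + N) * (y - (2 : ℝ) ^ (-(k : ℤ)) * (K₀ : ℝ) * (μ' : ℝ) -
                      (2 : ℝ) ^ (-(k : ℤ) - 1)))) *
                ψ ((2 : ℝ) ^ k * y - (K₀ : ℝ) * (μ : ℝ))| ≤
          2 * |A 1 - A 0| * (2 : ℝ) ^ ((N : ℝ) * (-s + 1 / q - n - 1)) *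
            |∫ y in (0 : ℝ)..(1 / 2), y ^ n * η y| := by
  have hpw : IsPiecewisePolynomial n A ψ := fun θ => by
    obtain ⟨c, hcn, hc⟩ := hpoly θ
    obtain ⟨P, hdeg, hcoeff, heval⟩ := Polynomial.exists_eval_eq_sum_range c n
    exact ⟨P, hdeg, hcoeff.trans hcn, fun x hx => (hc x hx).trans (heval x).symm⟩
  have hsupp : Function.support η ⊆ Icc (-(2 : ℝ) ^ (-5 : ℤ)) ((2 : ℝ) ^ (-5 : ℤ)) :=
    fun y hy => Ioo_subset_Icc_self (by_contra fun h => hy (hηsupp y h))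
  obtain ⟨K, hK1, hK⟩ := exists_forall_abs_sum_range_comp_sub_le (by positivity) hγ
    (hpw.abs_jump_le hn hsmooth hC.le hγ.le (hdecay (n - 1) le_rfl))
    (half_pos (abs_pos.2 hAtilde))
  refine ⟨K, hK1, fun K₀ hK₀ s q _ k N μ hμ => ?_⟩
  have hS := hK K₀ hK₀ (2 ^ k) μ hμ
  rw [jump_zero] at hS
  obtain ⟨hlower, hupper⟩ := half_abs_le_abs_and_abs_le_two_mul hS
  have hP := rpow_pos_of_pos two_pos ((N : ℝ) * (-s + 1 / q - n - 1))
  rw [hpw.two_pow_mul_integral_eq hsmooth hη (by norm_num) hsupp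
      (fun j hj => hηmom j (by omega)), abs_mul, abs_mul, abs_of_pos hP]
  have hPJ := mul_nonneg hP.le (abs_nonneg (∫ y in (0 : ℝ)..(1 / 2), y ^ n * η y))
  constructor <;> nlinarith

theorem stmt_9
    (n : ℕ) (hn : 1 ≤ n) (ψ : ℝ → ℝ)
    (hsmooth : ContDiff ℝ (n - 1 : ℕ) ψ)
    (A : ℤ → ℝ)
    (hpoly : ∀ θ : ℤ, ∃ c : ℕ → ℝ, c n = A θ ∧
      ∀ x ∈ Set.Icc ((θ : ℝ) / 2) (((θ : ℝ) + 1) / 2),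
        ψ x = ∑ j ∈ Finset.range (n + 1), c j * x ^ j)
    (C γ : ℝ) (hC : 0 < C) (hγ : 0 < γ)
    (hdecay : ∀ α : ℕ, α ≤ n - 1 → ∀ x : ℝ,
      |iteratedDeriv α ψ x| ≤ C * Real.exp (-γ * |x|))
    (hAtilde : A 1 - A 0 ≠ 0)
    (η : ℝ → ℝ) (hη : MeasureTheory.Integrable η)
    (hηsupp : ∀ y : ℝ, y ∉ Set.Ioo (-(2 : ℝ) ^ (-5 : ℤ)) ((2 : ℝ) ^ (-5 : ℤ)) → η y = 0)
    (hηmom : ∀ M : ℕ, M ≤ n + 2 → ∫ y : ℝ, y ^ M * η y = 0)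
    (hηodd : ∀ y : ℝ, (-y) ^ n * η (-y) = -(y ^ n * η y)) :
    ∃ K₀star : ℤ, 1 ≤ K₀star ∧
      ∀ K₀ : ℤ, K₀star ≤ K₀ →
      ∀ s q : ℝ, 1 < q →
      ∀ k N : ℕ, ∀ μ : ℕ, μ < 2 ^ k →
        |A 1 - A 0| / 2 * (2 : ℝ) ^ ((N : ℝ) * (-s + 1 / q - n - 1)) *
            |∫ y in (0 : ℝ)..(1 / 2), y ^ n * η y| ≤
          |(2 : ℝ) ^ k * ∫ y : ℝ,
              ((2 : ℝ) ^ ((N : ℝ) * (-s + 1 / q)) *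
                ∑ μ' ∈ Finset.range (2 ^ k),
                  η ((2 : ℝ) ^ (k + N) * (y - (2 : ℝ) ^ (-(k : ℤ)) * (K₀ : ℝ) * (μ' : ℝ) -
                      (2 : ℝ) ^ (-(k : ℤ) - 1)))) *
                ψ ((2 : ℝ) ^ k * y - (K₀ : ℝ) * (μ : ℝ))| ∧
          |(2 : ℝ) ^ k * ∫ y : ℝ,
              ((2 : ℝ) ^ ((N : ℝ) * (-s + 1 / q)) *
                ∑ μ' ∈ Finset.range (2 ^ k),
                  η ((2 : ℝ) ^ (k + N) * (y - (2 : ℝ) ^ (-(k : ℤ)) * (K₀ : ℝ) * (μ' : ℝ) -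
                      (2 : ℝ) ^ (-(k : ℤ) - 1)))) *
                ψ ((2 : ℝ) ^ k * y - (K₀ : ℝ) * (μ : ℝ))| ≤
          2 * |A 1 - A 0| * (2 : ℝ) ^ ((N : ℝ) * (-s + 1 / q - n - 1)) *
            |∫ y in (0 : ℝ)..(1 / 2), y ^ n * η y| :=
  stmt_9_general n hn ψ hsmooth A hpoly C γ hC hγ hdecay hAtilde η hη hηsupp hηmom
end
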